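/- arXiv:math/0511606 — 14 statements merged into one kernel-verified Lean document; each statement's English description precedes it below -/
import Mathlib

section
/- Let X be a topological space, Y a Tychonoff (completely regular Hausdorff) space, and p a multivalued mapping from X to Y. Then the following are equivalent: (a) p is compact-valued and upper semicontinuous; (b) there exist a compact Hausdorff space K, a closed subspace F of the product X × K, and a continuous function f : F → Y such that for every x ∈ X one has p(x) = f({(x,k) ∈ F : k ∈ K}) (that is, p is the composition of the inverse of the projection X × K → X restricted to F with the continuous map f). -/
open Set TopologicalSpace

open Topology Filter unitInterval

universe u v

section Emb
variable {Y : Type v} [TopologicalSpace Y] [T35Space Y]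

noncomputable def myEmb (Y : Type v) [TopologicalSpace Y] : Y → ({g : Y → I // Continuous g} → I) :=
  fun y g => g.1 y

omit [T35Space Y] in
lemma myEmb_cont : Continuous (myEmb Y) :=
  continuous_pi fun g => g.2

lemma myEmb_inj : Function.Injective (myEmb Y) := by
  intro a b hab
  by_contra h
  obtain ⟨g, hg, hne⟩ := separatesPoints_continuous_of_t35Space_Icc h
  exact hne (congrFun hab ⟨g, hg⟩)

lemma myEmb_inducing : Topology.IsInducing (myEmb Y) := by
  rw [isInducing_iff_nhds]
  intro y
  refine le_antisymm ((myEmb_cont.tendsto y).le_comap) ?_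
  intro U hU
  obtain ⟨V, hVU, hVopen, hyV⟩ := mem_nhds_iff.1 hU
  obtain ⟨g, hg, hg0, hg1⟩ :=
    CompletelyRegularSpace.completely_regular y Vᶜ hVopen.isClosed_compl (by simpa)
  refine mem_comap.2 ⟨{h | h ⟨g, hg⟩ < 1}, ?_, ?_⟩
  · exact (isOpen_lt (continuous_apply _) continuous_const).mem_nhds
      (by simp [myEmb, hg0])
  · intro z hz
    simp only [myEmb, mem_setOf_eq, mem_preimage] at hz
    by_contra hzU
    have hzV : z ∈ Vᶜ := fun hzV => hzU (hVU hzV)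
    rw [hg1 hzV] at hz
    exact lt_irrefl _ hz

lemma myEmb_embedding : Topology.IsEmbedding (myEmb Y) :=
  ⟨myEmb_inducing, myEmb_inj⟩

end Emb

/-- A multivalued mapping `p : X → Set Y` into a Tychonoff space `Y` is
compact-valued and upper semicontinuous iff there are a compact Hausdorff space `K`,
a closed subspace `F ⊆ X × K` and a continuous `f : F → Y` such that
`p x = f '' {(x,k) ∈ F}` for every `x`. -/
theorem stmt0 {X : Type u} {Y : Type v} [TopologicalSpace X] [TopologicalSpace Y]
    [T35Space Y] (p : X → Set Y) :
    ((∀ x, IsCompact (p x)) ∧ ∀ V : Set Y, IsOpen V → IsOpen {x | p x ⊆ V}) ↔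
    ∃ (K : Type (max u v)) (_ : TopologicalSpace K), CompactSpace K ∧ T2Space K ∧
      ∃ F : Set (X × K), IsClosed F ∧ ∃ f : F → Y, Continuous f ∧
        ∀ x : X, p x = f '' {z : F | (z : X × K).1 = x} := by
  constructor
  · rintro ⟨hcomp, husc⟩
    rcases isEmpty_or_nonempty Y with hY | hY
    · refine ⟨ULift.{u} ({g : Y → I // Continuous g} → I), inferInstance, inferInstance,
        inferInstance, ∅, isClosed_empty, fun z => absurd z.2 (Set.notMem_empty _), ?_, ?_⟩
      · exact continuous_of_const fun a b => rfl
      · intro x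
        rw [Set.eq_empty_of_isEmpty (p x)]
        refine (Set.eq_empty_of_isEmpty _).symm
    set K0 := ({g : Y → I // Continuous g} → I) with hK0
    set e : Y → ULift.{u} K0 := fun y => ULift.up (myEmb Y y) with he
    have hecont : Continuous e := Homeomorph.ulift.symm.continuous.comp myEmb_cont
    have heemb : Topology.IsEmbedding e :=
      (Homeomorph.ulift.symm.isEmbedding).comp myEmb_embedding
    refine ⟨ULift.{u} K0, inferInstance, inferInstance, inferInstance, ?_⟩
    set F : Set (X × ULift.{u} K0) := {z | z.2 ∈ e '' p z.1} with hF
    have hFclosed : IsClosed F := by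
      rw [← isOpen_compl_iff, isOpen_iff_forall_mem_open]
      rintro ⟨x, k⟩ hxk
      have hk : k ∉ e '' p x := hxk
      have hcpt : IsCompact (e '' p x) := (hcomp x).image hecont
      obtain ⟨U, V, hUo, hVo, hsubU, hkV, hdisj⟩ := hcpt.separation_of_notMem hk
      refine ⟨{x' | p x' ⊆ e ⁻¹' U} ×ˢ V, ?_, ?_, ?_⟩
      · rintro ⟨x', k'⟩ ⟨hx', hk'⟩ hmem
        obtain ⟨y, hy, hey⟩ := hmem
        exact Set.disjoint_left.1 hdisj (hey ▸ hx' hy) hk'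
      · exact (husc _ (hUo.preimage hecont)).prod hVo
      · exact ⟨fun y hy => hsubU ⟨y, hy, rfl⟩, hkV⟩
    refine ⟨F, hFclosed, ?_⟩
    set f : F → Y := fun z => Function.invFun e (z : X × ULift.{u} K0).2 with hf
    have hef : ∀ z : F, e (f z) = (z : X × ULift.{u} K0).2 := by
      rintro ⟨⟨x, k⟩, hz⟩
      obtain ⟨y, _, hey⟩ := hz
      exact Function.invFun_eq ⟨y, hey⟩
    have hfcont : Continuous f := by
      rw [heemb.continuous_iff]
      have : (e ∘ f) = fun z : F => (z : X × ULift.{u} K0).2 := funext hef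
      rw [this]
      exact continuous_snd.comp continuous_subtype_val
    refine ⟨f, hfcont, fun x => ?_⟩
    ext y
    constructor
    · intro hy
      refine ⟨⟨(x, e y), ⟨y, hy, rfl⟩⟩, rfl, ?_⟩
      have := hef ⟨(x, e y), ⟨y, hy, rfl⟩⟩
      exact heemb.injective this
    · rintro ⟨⟨⟨x', k⟩, hz⟩, hx', hfz⟩
      simp only [mem_setOf_eq] at hx'
      subst hx'
      obtain ⟨y', hy', hey'⟩ := hz
      have : f ⟨(x', k), ⟨y', hy', hey'⟩⟩ = y' := by
        apply heemb.injective
        rw [hef]; exact hey'.symm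
      rw [← hfz, this]; exact hy'
  · rintro ⟨K, _, _, _, F, hFclosed, f, hfcont, hp⟩
    constructor
    · intro x
      rw [hp]
      apply IsCompact.image _ hfcont
      rw [Topology.IsEmbedding.subtypeVal.isCompact_iff]
      have : (Subtype.val '' {z : F | (z : X × K).1 = x}) = F ∩ ({x} ×ˢ univ) := by
        rw [show {z : F | (z : X × K).1 = x} = Subtype.val ⁻¹' ({x} ×ˢ univ) by
          ext z
          simp only [mem_setOf_eq, mem_preimage, mem_prod, mem_singleton_iff, mem_univ, and_true]]
        exact Subtype.image_preimage_coe _ _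
      rw [this, inter_comm]
      exact (isCompact_singleton.prod isCompact_univ).inter_right hFclosed
    · intro V hV
      rw [isOpen_iff_forall_mem_open]
      intro x₀ hx₀
      obtain ⟨U, hUopen, hUeq⟩ := isOpen_induced_iff.1 (hV.preimage hfcont)
      have hsub : {x₀} ×ˢ (univ : Set K) ⊆ U ∪ Fᶜ := by
        rintro ⟨x, k⟩ ⟨hx, -⟩
        rcases Classical.em ((x, k) ∈ F) with hF' | hF'
        · left
          have hz : (⟨(x, k), hF'⟩ : F) ∈ f ⁻¹' V := by
            have : f ⟨(x, k), hF'⟩ ∈ p x₀ := by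
              rw [hp x₀]; exact ⟨⟨(x, k), hF'⟩, by simpa using hx, rfl⟩
            exact hx₀ this
          rw [← hUeq] at hz; exact hz
        · right; exact hF'
      obtain ⟨u, v, huo, hvo, hxu, hvuniv, huv⟩ :=
        generalized_tube_lemma isCompact_singleton isCompact_univ
          (hUopen.union hFclosed.isOpen_compl) hsub
      refine ⟨u, ?_, huo, hxu rfl⟩
      intro x hx y hy
      rw [hp x] at hy
      obtain ⟨⟨⟨x', k⟩, hzF⟩, hx', rfl⟩ := hy
      simp only [mem_setOf_eq] at hx'
      subst hx'
      have : (x', k) ∈ U ∪ Fᶜ := huv ⟨hx, hvuniv (mem_univ k)⟩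
      rcases this with h | h
      · have : (⟨(x', k), hzF⟩ : F) ∈ Subtype.val ⁻¹' U := h
        rw [hUeq] at this; exact this
      · exact absurd hzF h
end

section
/- Let κ be a cardinal and X a Tychonoff space. Then the following are equivalent: (a) there exist a second-countable space M and a compact-valued upper semicontinuous multivalued mapping p : M → X such that ⋃{p(m) : m ∈ M} = X and each p(m) has weight at most κ; (b) there exist a cover C of X by compact subsets each of weight at most κ and a countable family N of subsets of X that is a network with respect to C. -/
open Set TopologicalSpace

universe u

/-- `N` is a network with respect to the cover `C`. -/
def IsNetworkWith {X : Type*} [TopologicalSpace X] (N C : Set (Set X)) : Prop :=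
  ∀ c ∈ C, ∀ U : Set X, IsOpen U → c ⊆ U → ∃ n ∈ N, c ⊆ n ∧ n ⊆ U

/-- The space `Y` has weight at most `κ`: it has a topological basis of cardinality `≤ κ`. -/
def HasWeightLE (Y : Type u) [TopologicalSpace Y] (κ : Cardinal.{u}) : Prop :=
  ∃ B : Set (Set Y), IsTopologicalBasis B ∧ Cardinal.mk B ≤ κ

/-- `X` admits a compact-valued usc onto map from a second-countable space with
all values of weight `≤ κ` iff `X` has a cover by compact sets of weight `≤ κ` admitting a
countable network. -/
theorem stmt2 (κ : Cardinal.{u}) {X : Type u} [TopologicalSpace X] [T35Space X] :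
    (∃ (M : Type u) (_ : TopologicalSpace M), SecondCountableTopology M ∧
      ∃ p : M → Set X, (∀ m, IsCompact (p m)) ∧ (∀ m, HasWeightLE ↥(p m) κ) ∧
        (∀ V : Set X, IsOpen V → IsOpen {m | p m ⊆ V}) ∧ (⋃ m, p m) = univ) ↔
    (∃ C N : Set (Set X), ⋃₀ C = univ ∧
      (∀ c ∈ C, IsCompact c ∧ HasWeightLE ↥c κ) ∧
      N.Countable ∧ IsNetworkWith N C) := by
  constructor
  · rintro ⟨M, tM, hsc, p, hcomp, hwt, husc, hcov⟩
    obtain ⟨B, hBc, -, hB⟩ := TopologicalSpace.exists_countable_basis M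
    refine ⟨range p, (fun b : Set M => ⋃ m ∈ b, p m) '' B, ?_, ?_, hBc.image _, ?_⟩
    · rw [sUnion_range]; exact hcov
    · rintro c ⟨m, rfl⟩; exact ⟨hcomp m, hwt m⟩
    · rintro c ⟨m, rfl⟩ U hU hcU
      obtain ⟨b, hbB, hmb, hbW⟩ :=
        hB.exists_subset_of_mem_open (show m ∈ {m | p m ⊆ U} from hcU) (husc U hU)
      exact ⟨_, mem_image_of_mem _ hbB, subset_biUnion_of_mem hmb,
        iUnion₂_subset fun m' hm' => hbW hm'⟩
  · rintro ⟨C, N, hcov, hC, hNc, hNet⟩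
    haveI := hNc.to_subtype
    let f : ↥C → (↥N → Prop) := fun c n => (c : Set X) ⊆ (n : Set X)
    let T : TopologicalSpace ↥C := TopologicalSpace.induced f inferInstance
    have hind : @Topology.IsInducing _ _ T _ f := @Topology.IsInducing.mk _ _ T _ f rfl
    have hcontf : @Continuous _ _ T _ f := @continuous_induced_dom _ _ f _
    refine ⟨↥C, T, @Topology.IsInducing.secondCountableTopology _ _ T f _ _ hind,
      fun c => (c : Set X), fun c => (hC c c.2).1, fun c => (hC c c.2).2, ?_, ?_⟩
    · intro V hV
      have heq : {m : ↥C | (m : Set X) ⊆ V}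
          = ⋃ n : {n : ↥N // (n : Set X) ⊆ V}, f ⁻¹' {g | g n.1} := by
        ext c
        simp only [mem_setOf_eq, mem_iUnion, mem_preimage]
        constructor
        · intro hcV
          obtain ⟨n, hnN, hcn, hnV⟩ := hNet c c.2 V hV hcV
          exact ⟨⟨⟨n, hnN⟩, hnV⟩, hcn⟩
        · rintro ⟨n, hcn⟩
          exact subset_trans hcn n.2
      rw [show {m : ↥C | (fun c : ↥C => (c : Set X)) m ⊆ V} = {m : ↥C | (m : Set X) ⊆ V} from rfl,
        heq]
      refine @isOpen_iUnion _ _ T _ fun n => hcontf.isOpen_preimage _ ?_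
      have : {g : ↥N → Prop | g n.1} = (fun g : ↥N → Prop => g n.1) ⁻¹' {True} := by
        ext g; simp
      rw [this]
      exact (continuous_apply n.1).isOpen_preimage _ isOpen_singleton_true
    · rw [← hcov, sUnion_eq_iUnion]
end

section
/- Let κ be an uncountable regular cardinal and let X be a topological space admitting a cover C by compact subsets each of weight strictly less than κ together with a countable network with respect to C (that is, X ∈ LΣ(<κ)). Then every free sequence in X has length strictly less than κ: there is no function f : κ → X such that for every α < κ the closures of {f(β) : β < α} and {f(β) : α ≤ β < κ} are disjoint. -/
open Set TopologicalSpace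

universe u

/-- The space `Y` has weight strictly less than `κ`: it has a topological basis of
cardinality `< κ`. -/
def HasWeightLT (Y : Type u) [TopologicalSpace Y] (κ : Cardinal.{u}) : Prop :=
  ∃ B : Set (Set Y), IsTopologicalBasis B ∧ Cardinal.mk B < κ

/-- Any subset of `κ.ord.ToType` of cardinality not `< κ` is unbounded. -/
lemma big_unbounded_aux {κ : Cardinal.{u}} (hreg : κ.IsRegular)
    {s : Set κ.ord.ToType} (hs : ¬ Cardinal.mk s < κ) (γ : κ.ord.ToType) :
    ∃ β ∈ s, γ < β := by
  by_contra h
  push_neg at h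
  apply hs
  have hsub : s ⊆ Set.Iic γ := fun β hβ => h β hβ
  have h1 : Cardinal.mk s ≤ Cardinal.mk (Set.Iic γ) := Cardinal.mk_le_mk_of_subset hsub
  have h2 : Cardinal.mk (Set.Iic γ) ≤ Cardinal.mk (Set.Iio γ) + 1 := by
    rw [← Set.Iio_insert]
    exact Cardinal.mk_insert_le
  have h3 : Cardinal.mk (Set.Iio γ) + 1 < κ :=
    Cardinal.add_lt_of_lt hreg.aleph0_le (Cardinal.mk_Iio_ord_toType γ)
      (lt_of_lt_of_le Cardinal.one_lt_aleph0 hreg.aleph0_le)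
  exact lt_of_le_of_lt (h1.trans h2) h3

/-- Pigeonhole: a map from `κ.ord.ToType` to a type of size `< κ` has a fiber of size `κ`. -/
lemma exists_big_fiber_aux {κ : Cardinal.{u}} (hreg : κ.IsRegular) {A : Type u}
    (hA : Cardinal.mk A < κ) (g : κ.ord.ToType → A) :
    ∃ a : A, ¬ Cardinal.mk {β | g β = a} < κ := by
  by_contra h
  push_neg at h
  have h1 : (Set.univ : Set κ.ord.ToType) = ⋃ a : A, {β | g β = a} := by
    ext β; simp
  have h2 : Cardinal.mk (Set.univ : Set κ.ord.ToType) ≤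
      Cardinal.sum fun a : A => Cardinal.mk {β | g β = a} := by
    rw [h1]; exact Cardinal.mk_iUnion_le_sum_mk
  rw [Cardinal.mk_univ, Cardinal.mk_toType, Cardinal.card_ord] at h2
  exact absurd (h2.trans_lt (Cardinal.sum_lt_of_isRegular hreg hA h)) (lt_irrefl κ)

/-- if `κ` is an uncountable regular cardinal and `X` has a cover by compact
subsets of weight `< κ` with a countable network (i.e. `X ∈ LΣ(<κ)`), then there is no
free sequence of length `κ` in `X`. -/
theorem stmt5 {X : Type u} [TopologicalSpace X] (κ : Cardinal.{u})
    (hκ : Cardinal.aleph0 < κ) (hreg : κ.IsRegular)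
    (C N : Set (Set X)) (hcov : ⋃₀ C = univ)
    (hC : ∀ c ∈ C, IsCompact c ∧ HasWeightLT ↥c κ)
    (hN : N.Countable) (hnet : IsNetworkWith N C) :
    ¬ ∃ f : κ.ord.ToType → X, ∀ α : κ.ord.ToType,
        Disjoint (closure (f '' {β | β < α})) (closure (f '' {β | α ≤ β})) := by
  rintro ⟨f, hf⟩
  have hNlt : Cardinal.mk N < κ := by
    have : Countable ↥N := hN.to_subtype
    exact lt_of_le_of_lt Cardinal.mk_le_aleph0 hκ
  haveI hne : Nonempty κ.ord.ToType := by
    rw [← Cardinal.mk_ne_zero_iff, Cardinal.mk_toType, Cardinal.card_ord]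
    exact (Cardinal.aleph0_pos.trans hκ).ne'
  -- Step B: find c₀ ∈ C all of whose network oversets pick up κ-many points of the sequence
  obtain ⟨c₀, hc₀C, hbig⟩ :
      ∃ c ∈ C, ∀ n ∈ N, c ⊆ n → ¬ Cardinal.mk {β | f β ∈ n} < κ := by
    by_contra h
    push_neg at h
    have hc : ∀ β, ∃ c ∈ C, f β ∈ c := by
      intro β
      have : f β ∈ ⋃₀ C := by rw [hcov]; exact Set.mem_univ _
      exact this
    choose cc hccC hfcc using hc
    have hn : ∀ β, ∃ n, (n ∈ N ∧ cc β ⊆ n) ∧ Cardinal.mk {β' | f β' ∈ n} < κ := by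
      intro β
      obtain ⟨n, hnN, hsub, hsmall⟩ := h (cc β) (hccC β)
      exact ⟨n, ⟨hnN, hsub⟩, hsmall⟩
    choose nn hnn hsmall using hn
    obtain ⟨a, ha⟩ := exists_big_fiber_aux hreg hNlt (fun β => (⟨nn β, (hnn β).1⟩ : ↥N))
    obtain ⟨β₀, hβ₀, -⟩ := big_unbounded_aux hreg ha (Classical.arbitrary _)
    apply ha
    refine lt_of_le_of_lt (Cardinal.mk_le_mk_of_subset ?_) (hsmall β₀)
    intro β hβ
    have hval : nn β = nn β₀ := by
      have : (⟨nn β, (hnn β).1⟩ : ↥N) = ⟨nn β₀, (hnn β₀).1⟩ := hβ.trans hβ₀.symm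
      exact congrArg Subtype.val this
    exact hval ▸ ((hnn β).2 (hfcc β))
  -- Step C: every "tail window" starting at γ eventually has closure meeting c₀
  have hCB : ∀ γ, ∃ δ, (c₀ ∩ closure (f '' {β | γ ≤ β ∧ β < δ})).Nonempty := by
    intro γ
    by_contra h
    push_neg at h
    have hU : ∀ δ, ∃ n, (n ∈ N ∧ c₀ ⊆ n) ∧
        n ⊆ (closure (f '' {β | γ ≤ β ∧ β < δ}))ᶜ := by
      intro δ
      obtain ⟨n, hnN, h1, h2⟩ := hnet c₀ hc₀C (closure (f '' {β | γ ≤ β ∧ β < δ}))ᶜ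
        isClosed_closure.isOpen_compl
        (fun y hy => Set.mem_compl fun hy' => Set.eq_empty_iff_forall_notMem.mp (h δ) y ⟨hy, hy'⟩)
      exact ⟨n, ⟨hnN, h1⟩, h2⟩
    choose nn hnn hsub using hU
    obtain ⟨a, ha⟩ := exists_big_fiber_aux hreg hNlt (fun δ => (⟨nn δ, (hnn δ).1⟩ : ↥N))
    have hsubset : {β | f β ∈ (a : Set X)} ⊆ Set.Iio γ := by
      intro β hβ
      by_contra hβγ
      obtain ⟨δ, hδfib, hδ⟩ := big_unbounded_aux hreg ha β
      have hval : nn δ = (a : Set X) := congrArg Subtype.val hδfib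
      have hmem : f β ∈ nn δ := by rw [hval]; exact hβ
      exact (hsub δ hmem) (subset_closure ⟨β, ⟨not_lt.mp hβγ, hδ⟩, rfl⟩)
    obtain ⟨δ₀, hδ₀, -⟩ := big_unbounded_aux hreg ha γ
    have hc₀a : c₀ ⊆ (a : Set X) := by
      have hval : nn δ₀ = (a : Set X) := congrArg Subtype.val hδ₀
      exact hval ▸ (hnn δ₀).2
    exact hbig _ a.2 hc₀a
      (lt_of_le_of_lt (Cardinal.mk_le_mk_of_subset hsubset) (Cardinal.mk_Iio_ord_toType γ))
  -- Final step: use a small basis of c₀ and pigeonhole to contradict freeness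
  obtain ⟨-, B₀, hbasis, hBcard⟩ := hC c₀ hc₀C
  choose δ x hx using hCB
  have hxc : ∀ γ, x γ ∈ c₀ := fun γ => (hx γ).1
  have hxQ : ∀ γ, x γ ∈ closure (f '' {β | γ ≤ β}) := fun γ =>
    closure_mono (Set.image_mono (fun β hβ => hβ.1)) (hx γ).2
  have hxP : ∀ γ, x γ ∉ closure (f '' {β | β < γ}) := fun γ =>
    Set.disjoint_right.mp (hf γ) (hxQ γ)
  have hbEx : ∀ γ, ∃ b ∈ B₀, (⟨x γ, hxc γ⟩ : ↥c₀) ∈ b ∧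
      b ⊆ Subtype.val ⁻¹' (closure (f '' {β | β < γ}))ᶜ := by
    intro γ
    exact hbasis.exists_subset_of_mem_open (hxP γ)
      ((isClosed_closure.isOpen_compl).preimage continuous_subtype_val)
  choose b hbB hxb hbsub using hbEx
  obtain ⟨bs, hbs⟩ := exists_big_fiber_aux hreg hBcard (fun γ => (⟨b γ, hbB γ⟩ : ↥B₀))
  obtain ⟨γ₀, hγ₀, -⟩ := big_unbounded_aux hreg hbs (Classical.arbitrary _)
  obtain ⟨γ₁, hγ₁, hlt⟩ := big_unbounded_aux hreg hbs (δ γ₀)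
  have hbeq : b γ₀ = b γ₁ := by
    have : (⟨b γ₀, hbB γ₀⟩ : ↥B₀) = ⟨b γ₁, hbB γ₁⟩ := hγ₀.trans hγ₁.symm
    exact congrArg Subtype.val this
  have h1 : x γ₀ ∈ closure (f '' {β | β < γ₁}) := by
    refine closure_mono (Set.image_mono ?_) (hx γ₀).2
    intro β hβ
    exact hβ.2.trans hlt
  have h2 : (⟨x γ₀, hxc γ₀⟩ : ↥c₀) ∈ b γ₁ := hbeq ▸ hxb γ₀
  exact (hbsub γ₁ h2) h1
end

section
/- Let κ be an infinite cardinal and let X be a compact Hausdorff space in LΣ(≤κ). Then the tightness of X is at most κ: for every subset A ⊆ X and every point x in the closure of A, there exists a subset B ⊆ A with |B| ≤ κ such that x belongs to the closure of B. -/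
open Set TopologicalSpace

universe u

/-- `X ∈ LΣ(≤κ)`: there is a cover of `X` by compact subsets of weight `≤ κ`
admitting a countable network. -/
def LSigmaLe (κ : Cardinal.{u}) (X : Type u) [TopologicalSpace X] : Prop :=
  ∃ C N : Set (Set X), ⋃₀ C = univ ∧ (∀ c ∈ C, IsCompact c ∧ HasWeightLE ↥c κ) ∧
    N.Countable ∧ IsNetworkWith N C

namespace Stmt6

open Filter

@[reducible] def TT (κ : Cardinal.{u}) : Type u := (Order.succ κ).ord.ToType

variable {κ : Cardinal.{u}}

theorem hIioCard (t : TT κ) : Cardinal.mk (Iio t) ≤ κ :=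
  Order.lt_succ_iff.1 (Cardinal.mk_Iio_ord_toType t)

theorem hIicCard (hκ : Cardinal.aleph0 ≤ κ) (t : TT κ) : Cardinal.mk (Iic t) ≤ κ := by
  have h1 : (Iic t) = insert t (Iio t) := by
    ext y; simp [le_iff_lt_or_eq, or_comm]
  rw [h1]
  refine le_trans Cardinal.mk_insert_le ?_
  calc Cardinal.mk (Iio t) + 1 ≤ κ + 1 := add_le_add_left (hIioCard t) 1
    _ = κ := Cardinal.add_one_eq hκ

theorem nonemptyT : Nonempty (TT κ) := by
  rw [Ordinal.toType_nonempty_iff_ne_zero]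
  simp only [ne_eq, Cardinal.ord_eq_zero]
  intro h
  exact absurd h (Order.succ_ne_bot κ)

theorem bounded_of_card (hκ : Cardinal.aleph0 ≤ κ) {S : Set (TT κ)}
    (hS : Cardinal.mk S ≤ κ) : ∃ b : TT κ, ∀ s ∈ S, s ≤ b := by
  have hne := nonemptyT (κ := κ)
  rcases S.eq_empty_or_nonempty with rfl | hSne
  · exact ⟨Classical.arbitrary _, by simp⟩
  by_contra h
  push_neg at h
  have hcov : (univ : Set (TT κ)) ⊆ ⋃ s : S, Iic (s : TT κ) := by
    intro t _
    obtain ⟨s, hsS, hts⟩ := h t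
    exact mem_iUnion.2 ⟨⟨s, hsS⟩, le_of_lt hts⟩
  haveI : Nonempty S := hSne.to_subtype
  have hbig : Cardinal.mk (⋃ s : S, Iic (s : TT κ)) ≤ κ := by
    refine le_trans (Cardinal.mk_iUnion_le _) ?_
    refine le_trans (mul_le_mul' hS (ciSup_le' fun s => hIicCard hκ (s : TT κ))) ?_
    exact le_of_eq (Cardinal.mul_eq_self hκ)
  have h2 : Cardinal.mk (univ : Set (TT κ)) ≤ κ :=
    le_trans (Cardinal.mk_le_mk_of_subset hcov) hbig
  rw [Cardinal.mk_univ, Cardinal.mk_ord_toType] at h2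
  exact absurd h2 (not_le.2 (Order.lt_succ κ))

theorem cofinal_of_card {S : Set (TT κ)} (hS : ¬ Cardinal.mk S ≤ κ) :
    ∀ b : TT κ, ∃ s ∈ S, b ≤ s := by
  intro b
  by_contra h
  push_neg at h
  have hsub : S ⊆ Iio b := fun s hs => h s hs
  exact hS (le_trans (Cardinal.mk_le_mk_of_subset hsub) (hIioCard b))

theorem pigeonhole (hκ : Cardinal.aleph0 ≤ κ) {γ : Type u} [Countable γ]
    (f : TT κ → γ) : ∃ g : γ, ¬ Cardinal.mk (f ⁻¹' {g}) ≤ κ := by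
  by_contra h
  push_neg at h
  have hne := nonemptyT (κ := κ)
  haveI : Nonempty γ := ⟨f (Classical.arbitrary _)⟩
  have hcov : (univ : Set (TT κ)) ⊆ ⋃ g : γ, f ⁻¹' {g} := fun t _ => mem_iUnion.2 ⟨f t, rfl⟩
  have hγ : Cardinal.mk γ ≤ κ := le_trans Cardinal.mk_le_aleph0 hκ
  have hbig : Cardinal.mk (⋃ g : γ, f ⁻¹' {g}) ≤ κ := by
    refine le_trans (Cardinal.mk_iUnion_le _) ?_
    refine le_trans (mul_le_mul' hγ (ciSup_le' fun g => h g)) ?_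
    exact le_of_eq (Cardinal.mul_eq_self hκ)
  have h2 : Cardinal.mk (univ : Set (TT κ)) ≤ κ :=
    le_trans (Cardinal.mk_le_mk_of_subset hcov) hbig
  rw [Cardinal.mk_univ, Cardinal.mk_ord_toType] at h2
  exact absurd h2 (not_le.2 (Order.lt_succ κ))


variable {X : Type u} [TopologicalSpace X] [CompactSpace X] [T2Space X]

/-- `D` is `κ`-closed. -/
def KClosed (κ : Cardinal.{u}) (D : Set X) : Prop :=
  ∀ B : Set X, B ⊆ D → Cardinal.mk B ≤ κ → closure B ⊆ D

theorem exists_good_compact {D : Set X} {z : X}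
    (hzD : z ∉ D) (hz : z ∈ closure D) :
    ∃ K : Set X, IsClosed K ∧ K.Nonempty ∧
      (∀ U, IsOpen U → K ⊆ U → K ⊆ closure (D ∩ U)) ∧ K ∩ D = ∅ := by
  classical
  set S : Set (Set X) := {K | IsClosed K ∧ ∀ U, IsOpen U → K ⊆ U → z ∈ closure (D ∩ U)} with hS
  have huniv : (univ : Set X) ∈ S := by
    refine ⟨isClosed_univ, fun U hU hUuniv => ?_⟩
    rw [univ_subset_iff.1 hUuniv, inter_univ]
    exact hz
  have hchain : ∀ c ⊆ S, IsChain (· ⊆ ·) c → c.Nonempty → ∃ lb ∈ S, ∀ s ∈ c, lb ⊆ s := by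
    intro c hcS hchain hcne
    refine ⟨⋂₀ c, ⟨isClosed_sInter fun K hK => (hcS hK).1, ?_⟩, fun s hs => sInter_subset_of_mem hs⟩
    intro U hU hsub
    -- find a member of the chain inside U
    obtain ⟨K, hKc, hKU⟩ : ∃ K ∈ c, K ⊆ U := by
      by_contra hno
      push_neg at hno
      have hne : ∀ K ∈ c, (K \ U).Nonempty := by
        intro K hK
        rcases not_subset.1 (hno K hK) with ⟨p, hp, hpU⟩
        exact ⟨p, hp, hpU⟩
      set Fam : Set (Set X) := (fun K => K \ U) '' c with hFam
      haveI : Nonempty Fam := by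
        rcases hcne with ⟨K, hK⟩
        exact ⟨⟨K \ U, mem_image_of_mem _ hK⟩⟩
      have hdir : DirectedOn (· ⊇ ·) Fam := by
        rintro _ ⟨K₁, hK₁, rfl⟩ _ ⟨K₂, hK₂, rfl⟩
        rcases hchain.total hK₁ hK₂ with h | h
        · exact ⟨K₁ \ U, mem_image_of_mem _ hK₁, Subset.rfl, diff_subset_diff_left h⟩
        · exact ⟨K₂ \ U, mem_image_of_mem _ hK₂, diff_subset_diff_left h, Subset.rfl⟩
      have hclosed : ∀ F ∈ Fam, IsClosed F := by
        rintro _ ⟨K, hK, rfl⟩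
        exact ((hcS hK).1).sdiff hU
      have hcomp : ∀ F ∈ Fam, IsCompact F := fun F hF => (hclosed F hF).isCompact
      have hnonempty : ∀ F ∈ Fam, F.Nonempty := by
        rintro _ ⟨K, hK, rfl⟩; exact hne K hK
      obtain ⟨p, hp⟩ :=
        IsCompact.nonempty_sInter_of_directed_nonempty_isCompact_isClosed hdir hnonempty hcomp hclosed
      have hpK : p ∈ ⋂₀ c := by
        intro K hK
        have := hp _ (mem_image_of_mem _ hK)
        exact this.1
      have : p ∈ U := hsub hpK
      rcases hcne with ⟨K, hK⟩
      exact (hp _ (mem_image_of_mem _ hK)).2 this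
    exact (hcS hKc).2 U hU hKU
  obtain ⟨m, -, hmin⟩ := zorn_superset_nonempty S hchain univ huniv
  have hmS : m ∈ S := hmin.1
  have hmz : ∀ U, IsOpen U → m ⊆ U → z ∈ closure (D ∩ U) := hmS.2
  have hmcl : IsClosed m := hmS.1
  -- m nonempty
  have hmne : m.Nonempty := by
    rcases eq_empty_or_nonempty m with h | h
    · exfalso
      have := hmz ∅ isOpen_empty (by simp [h])
      simp at this
    · exact h
  -- Claim A
  have claimA : ∀ U, IsOpen U → m ⊆ U → m ⊆ closure (D ∩ U) := by
    intro U₀ hU₀ hmU₀ w hw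
    by_contra hwcl
    have hKS : m ∩ closure (D ∩ U₀) ∈ S := by
      refine ⟨hmcl.inter isClosed_closure, fun V hV hKV => ?_⟩
      have hV' : IsOpen (V ∪ (closure (D ∩ U₀))ᶜ) := hV.union isClosed_closure.isOpen_compl
      have hmV' : m ⊆ (V ∪ (closure (D ∩ U₀))ᶜ) ∩ U₀ := by
        intro p hp
        refine ⟨?_, hmU₀ hp⟩
        by_cases hpc : p ∈ closure (D ∩ U₀)
        · exact Or.inl (hKV ⟨hp, hpc⟩)
        · exact Or.inr hpc
      have := hmz _ (hV'.inter hU₀) hmV'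
      refine closure_mono ?_ this
      rintro p ⟨hpD, hpV', hpU₀⟩
      rcases hpV' with hpV | hpc
      · exact ⟨hpD, hpV⟩
      · exact absurd (subset_closure (show p ∈ D ∩ U₀ from ⟨hpD, hpU₀⟩)) hpc
    have heq : m ⊆ m ∩ closure (D ∩ U₀) := hmin.2 hKS inter_subset_left
    exact hwcl (heq hw).2
  -- Claim B
  have claimB : m ∩ D = ∅ := by
    by_contra hB
    obtain ⟨w, hwm, hwD⟩ := nonempty_iff_ne_empty.2 hB
    by_cases hthick : ∀ O, IsOpen O → w ∈ O → z ∈ closure (D ∩ O)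
    · -- then {w} ∈ S, so m = {w}; separate z from w
      have hwS : ({w} : Set X) ∈ S := by
        refine ⟨isClosed_singleton, fun U hU hwU => hthick U hU (hwU rfl)⟩
      have heq : m ⊆ {w} := hmin.2 hwS (singleton_subset_iff.2 hwm)
      have hzw : z ≠ w := fun h => hzD (h ▸ hwD)
      obtain ⟨Oz, Ow, hOz, hOw, hzOz, hwOw, hdisj⟩ := t2_separation hzw
      have : z ∈ closure (D ∩ Ow) := by
        apply hmz _ hOw
        exact fun p hp => heq hp ▸ hwOw
      have : z ∈ closure Ow := closure_mono inter_subset_right this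
      rcases mem_closure_iff.1 this Oz hOz hzOz with ⟨p, hpOz, hpOw⟩
      exact disjoint_left.1 hdisj hpOz hpOw
    · push_neg at hthick
      obtain ⟨O, hO, hwO, hzO⟩ := hthick
      have hKS : m \ O ∈ S := by
        refine ⟨hmcl.sdiff hO, fun V hV hKV => ?_⟩
        have : m ⊆ V ∪ O := by
          intro p hp
          by_cases hpO : p ∈ O
          · exact Or.inr hpO
          · exact Or.inl (hKV ⟨hp, hpO⟩)
        have := hmz _ (hV.union hO) this
        rw [inter_union_distrib_left] at this
        rw [closure_union] at this
        rcases this with h | h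
        · exact h
        · exact absurd h hzO
      have heq : m ⊆ m \ O := hmin.2 hKS diff_subset
      exact (heq hwm).2 hwO
  exact ⟨m, hmcl, hmne, claimA, claimB⟩


theorem lemmaG (hκ : Cardinal.aleph0 ≤ κ) {D K : Set X}
    (hD : KClosed κ D) (hKcl : IsClosed K) (hKne : K.Nonempty)
    (hgood : ∀ U, IsOpen U → K ⊆ U → K ⊆ closure (D ∩ U))
    {I : Type u} (hI : Cardinal.mk I ≤ κ) (V : I → Set X)
    (hVo : ∀ i, IsOpen (V i)) (hVK : ∀ i, K ⊆ V i) :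
    (D ∩ ⋂ i, V i).Nonempty := by
  classical
  have hW : ∀ i, ∃ W : Set X, IsOpen W ∧ K ⊆ W ∧ closure W ⊆ V i := fun i =>
    normal_exists_closure_subset hKcl (hVo i) (hVK i)
  choose W hWo hWK hWV using hW
  have hpt : ∀ F : Finset I, (D ∩ ⋂ i ∈ F, W i).Nonempty := by
    intro F
    have hUo : IsOpen (⋂ i ∈ F, W i) := isOpen_biInter_finset (fun i _ => hWo i)
    have hUK : K ⊆ ⋂ i ∈ F, W i := subset_iInter₂ fun i _ => hWK i
    rcases hKne with ⟨w, hw⟩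
    exact closure_nonempty_iff.1 ⟨w, hgood _ hUo hUK hw⟩
  choose d hd using hpt
  have hdD : ∀ F, d F ∈ D := fun F => (hd F).1
  have hdW : ∀ F, ∀ i ∈ F, d F ∈ W i := by
    intro F i hi
    have := (hd F).2
    rw [mem_iInter₂] at this
    exact this i hi
  -- cardinality of the range
  have hrange : Cardinal.mk (range d) ≤ κ := by
    refine le_trans Cardinal.mk_range_le ?_
    have hsurj : Function.Surjective (fun l : List I => l.toFinset) := by
      intro F
      exact ⟨F.toList, by simp⟩
    refine le_trans (Cardinal.mk_le_of_surjective hsurj) ?_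
    exact le_trans (Cardinal.mk_list_le_max I) (max_le hκ hI)
  have hclD : closure (range d) ⊆ D := hD _ (range_subset_iff.2 hdD) hrange
  have hcomp : IsCompact (closure (range d)) := isClosed_closure.isCompact
  haveI : Nonempty (Finset I) := ⟨∅⟩
  have hle : Filter.map d atTop ≤ Filter.principal (closure (range d)) := by
    rw [Filter.le_principal_iff]
    exact Filter.mem_map.2 (Filter.Eventually.of_forall fun F => subset_closure (mem_range_self F))
  obtain ⟨p, hpcl, hp⟩ := hcomp.exists_clusterPt hle
  refine ⟨p, hclD hpcl, mem_iInter.2 fun i => ?_⟩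
  have hmem : d '' {F : Finset I | {i} ≤ F} ∈ Filter.map d atTop := by
    refine Filter.mem_map.2 (Filter.mem_of_superset (Filter.mem_atTop {i}) ?_)
    exact fun F hF => mem_image_of_mem d hF
  have hcl : p ∈ closure (d '' {F : Finset I | {i} ≤ F}) := by
    have : ClusterPt p (Filter.principal (d '' {F : Finset I | {i} ≤ F})) :=
      hp.mono (Filter.le_principal_iff.2 hmem)
    exact mem_closure_iff_clusterPt.2 this
  have hsub : d '' {F : Finset I | {i} ≤ F} ⊆ W i := by
    rintro _ ⟨F, hF, rfl⟩
    exact hdW F i (Finset.singleton_subset_iff.1 hF)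
  exact hWV i (closure_mono hsub hcl)

theorem exists_free_seq (hκ : Cardinal.aleph0 ≤ κ) {D : Set X}
    (hD : KClosed κ D) {z : X} (hzD : z ∉ D) (hz : z ∈ closure D) :
    ∃ x : (Order.succ κ).ord.ToType → X, (∀ t, x t ∈ D) ∧
      ∀ t, Disjoint (closure (x '' Iio t)) (closure (x '' Ici t)) := by
  classical
  obtain ⟨K, hKcl, hKne, hgood, hKD⟩ := exists_good_compact hzD hz
  -- separator choice function
  have hsep : ∀ C : Set X, ∃ V : Set X, IsOpen V ∧ K ⊆ V ∧
      (Disjoint (closure C) K → Disjoint (closure V) (closure C)) := by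
    intro C
    by_cases h : Disjoint (closure C) K
    · have hsub : K ⊆ (closure C)ᶜ := subset_compl_iff_disjoint_left.2 h
      obtain ⟨V, hVo, hKV, hVsub⟩ :=
        normal_exists_closure_subset hKcl isClosed_closure.isOpen_compl hsub
      exact ⟨V, hVo, hKV, fun _ => disjoint_compl_left.mono_left hVsub⟩
    · exact ⟨univ, isOpen_univ, subset_univ _, fun hd => absurd hd h⟩
  choose sep sepOpen sepK sepDisj using hsep
  set T := (Order.succ κ).ord.ToType with hT
  have wf : WellFounded ((· < ·) : T → T → Prop) := (inferInstance : WellFoundedLT T).wf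
  have hIio_card : ∀ t : T, Cardinal.mk (Iio t) ≤ κ := fun t =>
    Order.lt_succ_iff.1 (Cardinal.mk_Iio_ord_toType t)
  have hIic_card : ∀ t : T, Cardinal.mk (Iic t) ≤ κ := by
    intro t
    have h1 : (Iic t : Set T) = insert t (Iio t) := by
      ext y; simp [le_iff_lt_or_eq, or_comm]
    rw [h1]
    refine le_trans (Cardinal.mk_insert_le) ?_
    calc Cardinal.mk (Iio t) + 1 ≤ κ + 1 := by
          exact add_le_add_left (hIio_card t) 1
      _ = κ := Cardinal.add_one_eq hκ
  -- recursive construction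
  let F : ∀ t : T, (∀ s, s < t → X) → X := fun t ih =>
    if hP : (D ∩ ⋂ s : Iic t,
        sep {y | ∃ s', ∃ h : s' < (s : T), ih s' (h.trans_le s.2) = y}).Nonempty
    then hP.some else z
  let x : T → X := fun t => wf.fix F t
  have hfix : ∀ t, x t = F t (fun s _ => x s) := fun t => wf.fix_eq F t
  have himg : ∀ s : T, {y | ∃ s', ∃ _h : s' < s, x s' = y} = x '' Iio s := by
    intro s; ext y
    simp only [mem_setOf_eq, mem_image, mem_Iio]
    constructor
    · rintro ⟨s', h, rfl⟩; exact ⟨s', h, rfl⟩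
    · rintro ⟨s', h, rfl⟩; exact ⟨s', h, rfl⟩
  have hset : ∀ t : T, (D ∩ ⋂ s : Iic t, sep {y | ∃ s', ∃ _h : s' < (s : T), x s' = y})
      = (D ∩ ⋂ s : Iic t, sep (x '' Iio (s : T))) := by
    intro t; simp only [himg]
  -- main invariant
  have key : ∀ t : T, x t ∈ D ∩ ⋂ s : Iic t, sep (x '' Iio (s : T)) := by
    intro t
    induction t using WellFounded.induction wf with
    | _ t ih =>
      have hne : (D ∩ ⋂ s : Iic t, sep (x '' Iio (s : T))).Nonempty := by
        refine lemmaG hκ hD hKcl hKne hgood (hIic_card t)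
          (fun s : Iic t => sep (x '' Iio (s : T))) (fun s => sepOpen _) (fun s => sepK _)
      have hne0 : (D ∩ ⋂ s : Iic t,
          sep {y | ∃ s', ∃ _h : s' < (s : T), x s' = y}).Nonempty := by
        rw [hset t]; exact hne
      rw [hfix t]
      show (if hP : (D ∩ ⋂ s : Iic t,
          sep {y | ∃ s', ∃ h : s' < (s : T), x s' = y}).Nonempty then hP.some else z)
          ∈ D ∩ ⋂ s : Iic t, sep (x '' Iio (s : T))
      rw [dif_pos hne0]
      exact (hset t) ▸ hne0.some_mem
  have hxD : ∀ t, x t ∈ D := fun t => (key t).1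
  have hsmall : ∀ s : T, Disjoint (closure (x '' Iio s)) K := by
    intro s
    have hsubD : x '' Iio s ⊆ D := by
      rintro _ ⟨s', _, rfl⟩; exact hxD s'
    have hclD : closure (x '' Iio s) ⊆ D :=
      hD _ hsubD (le_trans Cardinal.mk_image_le (hIio_card s))
    rw [disjoint_left]
    intro p hp hpK
    have : p ∈ K ∩ D := ⟨hpK, hclD hp⟩
    rw [hKD] at this
    exact this
  refine ⟨x, hxD, fun t => ?_⟩
  have hdis := sepDisj (x '' Iio t) (hsmall t)
  have hsub : x '' Ici t ⊆ sep (x '' Iio t) := by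
    rintro _ ⟨s, hs, rfl⟩
    have h2 := (key s).2
    rw [mem_iInter] at h2
    exact h2 ⟨t, hs⟩
  exact (hdis.mono_left (closure_mono hsub)).symm

end Stmt6

/-- a compact Hausdorff space in `LΣ(≤κ)`, `κ` infinite, has tightness `≤ κ`. -/
theorem stmt6 {X : Type u} [TopologicalSpace X] [CompactSpace X] [T2Space X]
    (κ : Cardinal.{u}) (hκ : Cardinal.aleph0 ≤ κ) (h : LSigmaLe κ X) :
    ∀ A : Set X, ∀ x ∈ closure A, ∃ B ⊆ A, Cardinal.mk ↥B ≤ κ ∧ x ∈ closure B := by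
  classical
  intro A x hx
  obtain ⟨C, N, hcover, hCprop, hNcount, hnet⟩ := h
  set D : Set X := {y | ∃ B : Set X, B ⊆ A ∧ Cardinal.mk B ≤ κ ∧ y ∈ closure B} with hDdef
  by_cases hxD : x ∈ D
  · obtain ⟨B, hBA, hBκ, hxB⟩ := hxD
    exact ⟨B, hBA, hBκ, hxB⟩
  exfalso
  have hAD : A ⊆ D := by
    intro a ha
    refine ⟨{a}, singleton_subset_iff.2 ha, ?_, subset_closure rfl⟩
    rw [Cardinal.mk_singleton]
    exact le_trans (le_of_lt Cardinal.one_lt_aleph0) hκ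
  have hDK : Stmt6.KClosed κ D := by
    intro B hBD hBκ
    have hw : ∀ b : B, ∃ Ab : Set X, Ab ⊆ A ∧ Cardinal.mk Ab ≤ κ ∧ (b : X) ∈ closure Ab :=
      fun b => hBD b.2
    choose Ab hAbA hAbκ hAbcl using hw
    have hUA : (⋃ b : B, Ab b) ⊆ A := iUnion_subset hAbA
    have hUκ : Cardinal.mk (⋃ b : B, Ab b) ≤ κ := by
      rcases isEmpty_or_nonempty B with hB | hB
      · rw [iUnion_of_empty]
        simp
      · refine le_trans (Cardinal.mk_iUnion_le _) ?_
        exact le_trans (mul_le_mul' hBκ (ciSup_le' hAbκ)) (le_of_eq (Cardinal.mul_eq_self hκ))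
    have hBcl : B ⊆ closure (⋃ b : B, Ab b) := by
      intro b hb
      exact closure_mono (subset_iUnion _ ⟨b, hb⟩) (hAbcl ⟨b, hb⟩)
    intro y hy
    exact ⟨_, hUA, hUκ, (closure_minimal hBcl isClosed_closure) hy⟩
  have hxcl : x ∈ closure D := closure_mono hAD hx
  obtain ⟨xx, hxxD, hfree⟩ := Stmt6.exists_free_seq hκ hDK hxD hxcl
  -- the free sequence machinery
  set S : Stmt6.TT κ → Set X := fun t => closure (xx '' Iio t) with hSdef
  set Tc : Stmt6.TT κ → Set X := fun t => closure (xx '' Ici t) with hTdef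
  set Z : Set X := closure (range xx) with hZdef
  have hScl : ∀ t, IsClosed (S t) := fun t => isClosed_closure
  have hTcl : ∀ t, IsClosed (Tc t) := fun t => isClosed_closure
  have hZcl : IsClosed Z := isClosed_closure
  have hdisj : ∀ t, Disjoint (S t) (Tc t) := hfree
  have hSmono : ∀ {s t : Stmt6.TT κ}, s ≤ t → S s ⊆ S t := by
    intro s t hst
    exact closure_mono (image_mono fun y hy => lt_of_lt_of_le hy hst)
  have hZeq : ∀ t, Z = S t ∪ Tc t := by
    intro t
    have h1 : range xx = xx '' Iio t ∪ xx '' Ici t := by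
      rw [← image_union, Iio_union_Ici, image_univ]
    rw [hZdef, h1, closure_union]
  have hxxZ : ∀ t, xx t ∈ Z := fun t => subset_closure (mem_range_self t)
  have hxxT : ∀ {s t : Stmt6.TT κ}, s ≤ t → xx t ∈ Tc s := fun hst =>
    subset_closure ⟨_, hst, rfl⟩
  have hxxnotS : ∀ {s t : Stmt6.TT κ}, s ≤ t → xx t ∉ S s := fun hst hS =>
    disjoint_left.1 (hdisj _) hS (hxxT hst)
  have hxxS : ∀ {s t : Stmt6.TT κ}, t < s → xx t ∈ S s := fun hst =>
    subset_closure ⟨_, hst, rfl⟩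
  have wf : WellFounded ((· < ·) : Stmt6.TT κ → Stmt6.TT κ → Prop) :=
    (inferInstance : WellFoundedLT (Stmt6.TT κ)).wf
  -- trace lemma
  have trace : ∀ c ∈ C, ∃ τ : Stmt6.TT κ, ∀ y ∈ c ∩ Z, y ∈ S τ ∨ y ∉ ⋃ t, S t := by
    intro c hc
    obtain ⟨-, Bc, hBcbasis, hBcκ⟩ := hCprop c hc
    set R : Set (Stmt6.TT κ) :=
      {t | ∃ y, (y ∈ c ∩ Z ∧ y ∈ S t) ∧ ∀ s, s < t → y ∉ S s} with hRdef
    have hwit : ∀ t : R, ∃ y, (y ∈ c ∩ Z ∧ y ∈ S (t : Stmt6.TT κ)) ∧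
        ∀ s, s < (t : Stmt6.TT κ) → y ∉ S s := fun t => t.2
    choose yy hyy1 hyy2 using hwit
    have hb : ∀ t : R, ∃ b ∈ Bc, (⟨yy t, (hyy1 t).1.1⟩ : c) ∈ b ∧
        b ⊆ (Subtype.val ⁻¹' (Tc (t : Stmt6.TT κ))ᶜ) := by
      intro t
      have hyT : yy t ∉ Tc (t : Stmt6.TT κ) := fun hmem =>
        disjoint_left.1 (hdisj _) (hyy1 t).2 hmem
      have hopen : IsOpen ((Subtype.val : c → X) ⁻¹' (Tc (t : Stmt6.TT κ))ᶜ) :=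
        ((hTcl _).isOpen_compl).preimage continuous_subtype_val
      exact hBcbasis.exists_subset_of_mem_open hyT hopen
    choose bb hbbBc hbbmem hbbsub using hb
    have hclaim : ∀ t t' : R, (t : Stmt6.TT κ) < (t' : Stmt6.TT κ) → bb t ≠ bb t' := by
      intro t t' hlt he
      have h1 : (⟨yy t', (hyy1 t').1.1⟩ : c) ∈ bb t := he ▸ hbbmem t'
      have h2 : yy t' ∉ Tc (t : Stmt6.TT κ) := hbbsub t h1
      have h3 : yy t' ∈ S (t : Stmt6.TT κ) := by
        have := (hyy1 t').1.2
        rw [hZeq (t : Stmt6.TT κ)] at this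
        rcases this with hS | hT
        · exact hS
        · exact absurd hT h2
      exact hyy2 t' _ hlt h3
    have hinj : Function.Injective (fun t : R => (⟨bb t, hbbBc t⟩ : Bc)) := by
      intro t t' he
      by_contra hne
      have hne' : (t : Stmt6.TT κ) ≠ (t' : Stmt6.TT κ) := fun hh =>
        hne (Subtype.ext hh)
      have hbbe : bb t = bb t' := by
        simpa using congrArg Subtype.val he
      rcases lt_or_gt_of_ne hne' with hlt | hlt
      · exact hclaim t t' hlt hbbe
      · exact hclaim t' t hlt hbbe.symm
    have hRκ : Cardinal.mk R ≤ κ := le_trans (Cardinal.mk_le_of_injective hinj) hBcκ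
    obtain ⟨τ, hτ⟩ := Stmt6.bounded_of_card hκ hRκ
    refine ⟨τ, fun y hy => ?_⟩
    by_cases hyU : y ∈ ⋃ t, S t
    · left
      obtain ⟨t', ht'⟩ := mem_iUnion.1 hyU
      set P : Set (Stmt6.TT κ) := {t | y ∈ S t} with hPdef
      have hPne : P.Nonempty := ⟨t', ht'⟩
      set t₀ := wf.min P hPne with ht₀def
      have ht₀P : y ∈ S t₀ := wf.min_mem P hPne
      have ht₀min : ∀ s, s < t₀ → y ∉ S s := fun s hs hmem =>
        wf.not_lt_min P hmem hs
      have ht₀R : t₀ ∈ R := ⟨y, ⟨hy, ht₀P⟩, ht₀min⟩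
      exact hSmono (hτ t₀ ht₀R) ht₀P
    · right; exact hyU
  -- no maximum
  haveI hTne : Nonempty (Stmt6.TT κ) := Stmt6.nonemptyT
  have hnomax : ∀ t : Stmt6.TT κ, ∃ σ, t < σ := by
    intro t
    by_contra hmax
    push_neg at hmax
    have hsub : (univ : Set (Stmt6.TT κ)) ⊆ Iic t := fun σ _ => hmax σ
    have h2 : Cardinal.mk (univ : Set (Stmt6.TT κ)) ≤ κ :=
      le_trans (Cardinal.mk_le_mk_of_subset hsub) (Stmt6.hIicCard hκ t)
    rw [Cardinal.mk_univ, Cardinal.mk_ord_toType] at h2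
    exact absurd h2 (not_le.2 (Order.lt_succ κ))
  -- covering compacts
  have hcov : ∀ t : Stmt6.TT κ, ∃ c ∈ C, xx t ∈ c := by
    intro t
    have hmem : xx t ∈ ⋃₀ C := by rw [hcover]; trivial
    exact mem_sUnion.1 hmem
  choose ct hctC hxct using hcov
  choose τc hτc using fun t => trace (ct t) (hctC t)
  -- network selections
  have hnsel : ∀ t σ : Stmt6.TT κ, ∃ n ∈ N, ct t ⊆ n ∧
      n ⊆ (Zᶜ ∪ (Tc (τc t))ᶜ ∪ (S σ)ᶜ) := by
    intro t σ
    refine hnet (ct t) (hctC t) _ ?_ ?_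
    · exact ((hZcl.isOpen_compl).union (hTcl _).isOpen_compl).union (hScl _).isOpen_compl
    · intro p hp
      by_cases hpZ : p ∈ Z
      · rcases hτc t p ⟨hp, hpZ⟩ with hpS | hnS
        · exact Or.inl (Or.inr fun hT => disjoint_left.1 (hdisj _) hpS hT)
        · exact Or.inr fun hpS => hnS (mem_iUnion.2 ⟨σ, hpS⟩)
      · exact Or.inl (Or.inl hpZ)
  choose nn hnnN hnn1 hnn2 using hnsel
  haveI : Countable N := hNcount.to_subtype
  -- first pigeonhole
  have PH1 : ∀ t : Stmt6.TT κ,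
      ∃ n : N, ¬ Cardinal.mk ((fun σ => (⟨nn t σ, hnnN t σ⟩ : N)) ⁻¹' {n}) ≤ κ :=
    fun t => Stmt6.pigeonhole hκ _
  choose n1 hn1 using PH1
  have hfib : ∀ t σ : Stmt6.TT κ,
      σ ∈ (fun σ => (⟨nn t σ, hnnN t σ⟩ : N)) ⁻¹' {n1 t} → nn t σ = (n1 t : Set X) := by
    intro t σ hσ
    have : (⟨nn t σ, hnnN t σ⟩ : N) = n1 t := hσ
    exact congrArg Subtype.val this
  have hn1prop : ∀ t : Stmt6.TT κ, ∀ p, p ∈ (n1 t : Set X) ∩ Z →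
      p ∈ S (τc t) ∨ p ∉ ⋃ σ, S σ := by
    rintro t p ⟨hpn, hpZ⟩
    by_cases hpS : p ∈ S (τc t)
    · exact Or.inl hpS
    · right
      have hpT : p ∈ Tc (τc t) := by
        have hm := hpZ
        rw [hZeq (τc t)] at hm
        rcases hm with hm | hm
        · exact absurd hm hpS
        · exact hm
      intro hpU
      obtain ⟨σ', hσ'⟩ := mem_iUnion.1 hpU
      obtain ⟨σ, hσfib, hσ'le⟩ := Stmt6.cofinal_of_card (hn1 t) σ'
      have he : nn t σ = (n1 t : Set X) := hfib t σ hσfib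
      have hpU2 := hnn2 t σ (he ▸ hpn)
      rcases hpU2 with (hcase | hcase) | hcase
      · exact hcase hpZ
      · exact hcase hpT
      · exact hcase (hSmono hσ'le hσ')
  -- second pigeonhole
  obtain ⟨nstar, hW⟩ := Stmt6.pigeonhole hκ (fun t => n1 t)
  obtain ⟨t₀, ht₀W, -⟩ := Stmt6.cofinal_of_card hW (Classical.arbitrary _)
  obtain ⟨t, htW, htτ⟩ := Stmt6.cofinal_of_card hW (τc t₀)
  have hxxn : xx t ∈ (n1 t : Set X) := by
    obtain ⟨σ, hσfib, -⟩ := Stmt6.cofinal_of_card (hn1 t) (Classical.arbitrary _)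
    have he : nn t σ = (n1 t : Set X) := hfib t σ hσfib
    exact he ▸ hnn1 t σ (hxct t)
  have hn1t : n1 t = n1 t₀ := by
    have h1 : n1 t = nstar := htW
    have h2 : n1 t₀ = nstar := ht₀W
    rw [h1, h2]
  have hfin := hn1prop t₀ (xx t) ⟨by rw [← hn1t]; exact hxxn, hxxZ t⟩
  rcases hfin with hS | hnU
  · exact hxxnotS htτ hS
  · obtain ⟨σ, hσ⟩ := hnomax t
    exact hnU (mem_iUnion.2 ⟨σ, hxxS hσ⟩)
end

section
/- Let X be a Polish space and let DC_ω(X) denote the subspace of ℝ^X (with the product/pointwise convergence topology) consisting of all functions f : X → ℝ whose set of points of discontinuity is countable. Then there exists a countable family N of closed subsets of DC_ω(X) such that for every f ∈ DC_ω(X) the set C_f = ⋂{N ∈ N : f ∈ N} is metrizable. Consequently, every compact subspace of DC_ω(X) belongs to LΣ(≤ω). -/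
open Set TopologicalSpace

/-- `Y ∈ LΣ(≤ω)`: there is a cover of `Y` by compact metrizable subsets
admitting a countable network. -/
def LSigmaLeOmega (Y : Type*) [TopologicalSpace Y] : Prop :=
  ∃ C N : Set (Set Y), ⋃₀ C = univ ∧ (∀ c ∈ C, IsCompact c ∧ MetrizableSpace c) ∧
    N.Countable ∧ IsNetworkWith N C

/-- `DCω X` is the subspace of `ℝ^X` (pointwise convergence topology) consisting of the
functions with only countably many points of discontinuity. -/
abbrev DComega (X : Type*) [TopologicalSpace X] : Type _ :=
  {f : X → ℝ // {x : X | ¬ ContinuousAt f x}.Countable}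

lemma continuous_evalDC {X : Type} [TopologicalSpace X] (x : X) :
    Continuous (fun g : DComega X => g.1 x) :=
  (continuous_apply x).comp continuous_subtype_val

/-- Auxiliary: the countable closed family with metrizable `C_f`'s. -/
lemma aux_family {X : Type} [TopologicalSpace X] [PolishSpace X] :
    ∃ N : Set (Set (DComega X)), N.Countable ∧ (∀ n ∈ N, IsClosed n) ∧
      ∀ f : DComega X, MetrizableSpace ↥(⋂₀ {n | n ∈ N ∧ f ∈ n}) := by
  classical
  set B := countableBasis X with hB
  set Φ : Set X × ℚ × ℚ → Set (DComega X) :=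
    fun p => {g : DComega X | ∀ x ∈ p.1, g.1 x ∈ Icc (p.2.1 : ℝ) (p.2.2 : ℝ)} with hΦ
  refine ⟨Φ '' (B ×ˢ (univ : Set (ℚ × ℚ))), ?_, ?_, ?_⟩
  · exact ((countable_countableBasis X).prod countable_univ).image Φ
  · rintro n ⟨⟨U, q, r⟩, -, rfl⟩
    have : Φ (U, q, r) = ⋂ x ∈ U, {g : DComega X | g.1 x ∈ Icc (q : ℝ) (r : ℝ)} := by
      ext g; simp [hΦ]
    rw [this]
    exact isClosed_biInter fun x _ => isClosed_Icc.preimage (continuous_evalDC x)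
  · intro f
    set Cf : Set (DComega X) := ⋂₀ {n | n ∈ Φ '' (B ×ˢ univ) ∧ f ∈ n} with hCf
    set D : Set X := {x : X | ¬ ContinuousAt f.1 x} with hD
    have hDc : D.Countable := f.2
    -- key: elements of Cf agree with f at continuity points of f
    have key : ∀ g : DComega X, g ∈ Cf → ∀ x : X, ContinuousAt f.1 x → g.1 x = f.1 x := by
      intro g hg x hx
      apply eq_of_forall_dist_le
      intro ε hε
      obtain ⟨q, hq1, hq2⟩ := exists_rat_btwn (show f.1 x - ε / 2 < f.1 x by linarith)
      obtain ⟨r, hr1, hr2⟩ := exists_rat_btwn (show f.1 x < f.1 x + ε / 2 by linarith)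
      have hV : f.1 ⁻¹' Ioo (q : ℝ) (r : ℝ) ∈ nhds x :=
        hx.preimage_mem_nhds (Ioo_mem_nhds hq2 hr1)
      obtain ⟨U, hUB, hxU, hUV⟩ := (isBasis_countableBasis X).mem_nhds_iff.mp hV
      have hfn : f ∈ Φ (U, q, r) := by
        intro y hy
        exact Ioo_subset_Icc_self (hUV hy)
      have hgn : g ∈ Φ (U, q, r) :=
        hg (Φ (U, q, r)) ⟨⟨(U, q, r), ⟨hUB, mem_univ _⟩, rfl⟩, hfn⟩
      have h1 : g.1 x ∈ Icc (q : ℝ) (r : ℝ) := hgn x hxU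
      have h2 : f.1 x ∈ Icc (q : ℝ) (r : ℝ) := hfn x hxU
      rw [Real.dist_eq, abs_le]
      obtain ⟨h1a, h1b⟩ := h1
      obtain ⟨h2a, h2b⟩ := h2
      constructor <;> linarith
    -- embedding of Cf into ℝ^D
    haveI : Countable ↥D := hDc.to_subtype
    set φ : ↥Cf → (↥D → ℝ) := fun g d => g.1.1 d.1 with hφ
    have hφc : Continuous φ :=
      continuous_pi fun d => (continuous_evalDC d.1).comp continuous_subtype_val
    set E : (↥D → ℝ) → (X → ℝ) := fun h x => if hx : x ∈ D then h ⟨x, hx⟩ else f.1 x with hE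
    have hEc : Continuous E := by
      apply continuous_pi
      intro x
      by_cases hx : x ∈ D
      · simpa [hE, hx] using continuous_apply (⟨x, hx⟩ : ↥D)
      · simpa [hE, hx] using continuous_const (y := f.1 x)
    have hcomp : E ∘ φ = (fun g : ↥Cf => g.1.1) := by
      funext g
      funext x
      by_cases hx : x ∈ D
      · simp [hE, hφ, hx]
      · simp only [hE, hφ, Function.comp_apply, dif_neg hx]
        exact (key g.1 g.2 x (not_not.mp hx)).symm
    have hemb : Topology.IsEmbedding (fun g : ↥Cf => g.1.1) := by
      exact Topology.IsEmbedding.subtypeVal.comp Topology.IsEmbedding.subtypeVal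
    have hind : Topology.IsInducing φ := by
      apply Topology.IsInducing.of_comp hφc hEc
      rw [hcomp]
      exact hemb.isInducing
    have hinj : Function.Injective φ := by
      intro g1 g2 h
      have : E (φ g1) = E (φ g2) := by rw [h]
      have h2 : g1.1.1 = g2.1.1 := by
        have e1 := congrFun hcomp g1
        have e2 := congrFun hcomp g2
        simp only [Function.comp_apply] at e1 e2
        rw [← e1, ← e2]; exact this
      exact Subtype.ext (Subtype.ext h2)
    exact (Topology.IsEmbedding.mk hind hinj).metrizableSpace

/-- for a Polish space `X`, `DC_ω(X)` is metrizably-approximable: there is a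
countable family `N` of closed sets such that each `C_f = ⋂{n ∈ N : f ∈ n}` is metrizable.
Consequently every compact subspace of `DC_ω(X)` is in `LΣ(≤ω)`. -/
theorem stmt7 {X : Type} [TopologicalSpace X] [PolishSpace X] :
    (∃ N : Set (Set (DComega X)), N.Countable ∧ (∀ n ∈ N, IsClosed n) ∧
      ∀ f : DComega X, MetrizableSpace ↥(⋂₀ {n | n ∈ N ∧ f ∈ n})) ∧
    ∀ K : Set (DComega X), IsCompact K → LSigmaLeOmega ↥K := by
  obtain ⟨N, hNc, hNcl, hNm⟩ := aux_family (X := X)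
  refine ⟨⟨N, hNc, hNcl, hNm⟩, ?_⟩
  intro K hK
  haveI : CompactSpace ↥K := isCompact_iff_compactSpace.mp hK
  set ι : ↥K → DComega X := Subtype.val with hι
  set Cf : DComega X → Set (DComega X) := fun f => ⋂₀ {n | n ∈ N ∧ f ∈ n} with hCf
  have hCfcl : ∀ f, IsClosed (Cf f) := fun f =>
    isClosed_sInter fun n hn => hNcl n hn.1
  refine ⟨(fun f : DComega X => ι ⁻¹' Cf f) '' univ,
    (fun F : Set (Set (DComega X)) => ι ⁻¹' ⋂₀ F) '' {F | F.Finite ∧ F ⊆ N}, ?_, ?_, ?_, ?_⟩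
  · -- cover
    apply eq_univ_of_forall
    intro k
    refine ⟨ι ⁻¹' Cf k.1, ⟨k.1, mem_univ _, rfl⟩, ?_⟩
    intro n hn
    exact hn.2
  · -- compact metrizable
    rintro c ⟨f, -, rfl⟩
    constructor
    · exact ((hCfcl f).preimage continuous_subtype_val).isCompact
    · haveI := hNm f
      have hemb : Topology.IsEmbedding
          (fun z : ↥(ι ⁻¹' Cf f) => (⟨z.1.1, z.2⟩ : ↥(Cf f))) := by
        refine Topology.IsEmbedding.of_comp (Continuous.subtype_mk
          (continuous_subtype_val.comp continuous_subtype_val) _)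
          continuous_subtype_val ?_
        have h2 : (Subtype.val ∘ fun z : ↥(ι ⁻¹' Cf f) => (⟨z.1.1, z.2⟩ : ↥(Cf f)))
            = ((Subtype.val : ↥K → DComega X) ∘ (Subtype.val : ↥(ι ⁻¹' Cf f) → ↥K)) := rfl
        rw [h2]
        exact Topology.IsEmbedding.subtypeVal.comp Topology.IsEmbedding.subtypeVal
      exact hemb.metrizableSpace
  · -- countable network family
    exact (Set.countable_setOf_finite_subset hNc).image _
  · -- network property
    rintro c ⟨f, -, rfl⟩ U hU hcU
    have hUc : IsCompact Uᶜ := hU.isClosed_compl.isCompact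
    have hcover : Uᶜ ⊆ ⋃ n : {n // n ∈ N ∧ f ∈ n}, (ι ⁻¹' n.1)ᶜ := by
      intro z hz
      by_contra h
      simp only [mem_iUnion, not_exists, mem_compl_iff, not_not] at h
      apply hz
      apply hcU
      intro n hn
      exact h ⟨n, hn⟩
    obtain ⟨t, ht⟩ := hUc.elim_finite_subcover
      (fun n : {n // n ∈ N ∧ f ∈ n} => (ι ⁻¹' n.1)ᶜ)
      (fun n => ((hNcl n.1 n.2.1).preimage continuous_subtype_val).isOpen_compl) hcover
    set F : Set (Set (DComega X)) := Subtype.val '' (t : Set {n // n ∈ N ∧ f ∈ n}) with hF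
    refine ⟨ι ⁻¹' ⋂₀ F, ⟨F, ⟨(t.finite_toSet).image _, ?_⟩, rfl⟩, ?_, ?_⟩
    · rintro n ⟨m, -, rfl⟩; exact m.2.1
    · apply preimage_mono
      apply sInter_subset_sInter
      rintro n ⟨m, -, rfl⟩
      exact m.2
    · intro z hz
      by_contra hzU
      obtain ⟨n, hnt, hzn⟩ := mem_iUnion₂.mp (ht hzU)
      exact hzn (hz n.1 ⟨n, hnt, rfl⟩)
end

section
/- Let n ∈ ω and let X be a topological space admitting a pairwise disjoint family {U_α : α < ω₁} of open sets such that for each α < ω₁ there is a closed set Y_α ⊆ U_α with Y_α ∉ LΣ(≤n). Then X ∉ LΣ(≤ n+1). -/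
open Set TopologicalSpace

/-- `X ∈ LΣ(≤n)` for `n ∈ ω`: `X` has a cover by sets of cardinality at most `n`
admitting a countable network. -/
def LSigmaLeN (n : ℕ) (X : Type*) [TopologicalSpace X] : Prop :=
  ∃ C N : Set (Set X), ⋃₀ C = univ ∧ (∀ c ∈ C, c.Finite ∧ c.ncard ≤ n) ∧
    N.Countable ∧ IsNetworkWith N C

/-- The first uncountable ordinal `ω₁`, as an index type. -/
abbrev Omega1 : Type := (Cardinal.aleph 1).ord.ToType

/-- if `X` has a pairwise disjoint family `{U_α : α < ω₁}` of open sets,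
each containing a closed set `Y_α ∉ LΣ(≤n)`, then `X ∉ LΣ(≤ n+1)`. -/
theorem stmt9 {X : Type*} [TopologicalSpace X] (n : ℕ)
    (U : Omega1 → Set X) (hUo : ∀ α, IsOpen (U α))
    (hdisj : ∀ α β, α ≠ β → Disjoint (U α) (U β))
    (Y : Omega1 → Set X) (hYc : ∀ α, IsClosed (Y α)) (hYU : ∀ α, Y α ⊆ U α)
    (hY : ∀ α, ¬ LSigmaLeN n ↥(Y α)) :
    ¬ LSigmaLeN (n + 1) X := by
  rintro ⟨C, N, hcov, hcard, hNc, hnet⟩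
  -- the set of "bad" indices
  set A : Set Omega1 := {α | ∃ M ∈ N, M.Nonempty ∧ M ⊆ U α} with hA
  have hAc : A.Countable := by
    have : A ⊆ ⋃ M ∈ N, {α | M.Nonempty ∧ M ⊆ U α} := by
      intro α ⟨M, hM, hMn, hMU⟩
      exact mem_biUnion hM ⟨hMn, hMU⟩
    refine (hNc.biUnion fun M _ => ?_).mono this
    refine Set.Subsingleton.countable fun a ⟨hn, ha⟩ b ⟨_, hb⟩ => ?_
    by_contra hab
    have := ((hdisj a b hab).mono ha hb).eq_bot
    simp only [Set.inf_eq_inter, Set.inter_self, Set.bot_eq_empty] at this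
    exact hn.ne_empty this
  have : ¬ Countable Omega1 := by
    intro h
    have := Cardinal.mk_le_aleph0 (α := Omega1)
    rw [Cardinal.mk_ord_toType] at this
    exact absurd this (by simpa using (Cardinal.aleph0_lt_aleph_one).not_ge)
  obtain ⟨α, hα⟩ : ∃ α, α ∉ A := by
    by_contra h
    push_neg at h
    exact this (Set.countable_univ_iff.mp (by rwa [Set.eq_univ_of_forall h] at hAc))
  -- for this α, every c ∈ C meets Y α in at most n points
  have key : ∀ c ∈ C, (c ∩ Y α).ncard ≤ n := by
    intro c hc
    by_contra h
    push_neg at h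
    have hfin := (hcard c hc).1
    have h1 : n + 1 ≤ (c ∩ Y α).ncard := h
    have h2 : (c ∩ Y α).ncard ≤ c.ncard := Set.ncard_le_ncard inter_subset_left hfin
    have hcY : c ∩ Y α = c :=
      Set.eq_of_subset_of_ncard_le inter_subset_left
        (le_trans (hcard c hc).2 h1) hfin
    have hsub : c ⊆ Y α := by rw [← hcY]; exact inter_subset_right
    have hne : c.Nonempty := by
      rw [Set.nonempty_iff_ne_empty]; rintro rfl; simp at h1
    obtain ⟨M, hM, hcM, hMU⟩ := hnet c hc (U α) (hUo α) (hsub.trans (hYU α))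
    exact hα ⟨M, hM, hne.mono hcM, hMU⟩
  -- build a witness that Y α ∈ LΣ(≤ n)
  refine hY α ?_
  refine ⟨(fun c => Subtype.val ⁻¹' c) '' C, (fun c => Subtype.val ⁻¹' c) '' N,
    ?_, ?_, hNc.image _, ?_⟩
  · ext ⟨y, hy⟩
    simp only [mem_univ, iff_true, mem_sUnion]
    have : y ∈ ⋃₀ C := hcov ▸ mem_univ y
    obtain ⟨c, hc, hyc⟩ := this
    exact ⟨_, mem_image_of_mem _ hc, hyc⟩
  · rintro _ ⟨c, hc, rfl⟩
    have himg : Subtype.val '' (Subtype.val ⁻¹' c : Set (Y α)) = c ∩ Y α := by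
      rw [Subtype.image_preimage_coe, Set.inter_comm]
    have hfin : (Subtype.val ⁻¹' c : Set (Y α)).Finite :=
      Set.Finite.preimage (Subtype.val_injective.injOn) (hcard c hc).1
    constructor
    · exact hfin
    · have := Set.ncard_image_of_injective (Subtype.val ⁻¹' c : Set (Y α))
        (Subtype.val_injective)
      rw [himg] at this
      rw [← this]
      exact key c hc
  · rintro _ ⟨c, hc, rfl⟩ V hV hcV
    obtain ⟨W, hW, rfl⟩ := isOpen_induced_iff.mp hV
    have hcW : c ⊆ W ∪ (Y α)ᶜ := by
      intro x hx
      by_cases hxY : x ∈ Y α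
      · exact Or.inl (hcV (show (⟨x, hxY⟩ : Y α) ∈ _ from hx))
      · exact Or.inr hxY
    obtain ⟨M, hM, hcM, hMW⟩ := hnet c hc (W ∪ (Y α)ᶜ) (hW.union (hYc α).isOpen_compl) hcW
    refine ⟨Subtype.val ⁻¹' M, mem_image_of_mem _ hM, fun x hx => hcM hx, ?_⟩
    rintro ⟨x, hxY⟩ hxM
    rcases hMW hxM with h | h
    · exact h
    · exact absurd hxY h
end

section
/- Let n ∈ ω, let κ ≤ 2^ω be a cardinal, and let {X_ξ : ξ < κ} be a family of compact Hausdorff spaces each belonging to LΣ(≤n). Let X be the one-point compactification of the topological disjoint sum ⊕_{ξ<κ} X_ξ. Then X ∈ LΣ(≤ n+1). -/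
open Set TopologicalSpace

/-- if `κ ≤ 2^ω` and `{X_ξ : ξ < κ}` are compact Hausdorff spaces in
`LΣ(≤n)`, then the one-point compactification of their topological disjoint sum is in
`LΣ(≤ n+1)`. -/
theorem stmt10 {ι : Type} (hι : Cardinal.mk ι ≤ 2 ^ Cardinal.aleph0)
    (X : ι → Type) [∀ i, TopologicalSpace (X i)] [∀ i, CompactSpace (X i)]
    [∀ i, T2Space (X i)] (n : ℕ) (h : ∀ i, LSigmaLeN n (X i)) :
    LSigmaLeN (n + 1) (OnePoint (Σ i, X i)) := by
  classical
  -- an injection of `ι` into the Cantor set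
  have hcard : Cardinal.mk ι ≤ Cardinal.mk (ℕ → Bool) := by
    rwa [← Cardinal.power_def, Cardinal.mk_bool, Cardinal.mk_nat] at *
  obtain ⟨f⟩ : Nonempty (ι ↪ (ℕ → Bool)) := Cardinal.le_def _ _ |>.mp hcard
  -- data from the hypothesis
  choose C N hCcov hCcard hNcount hNet using h
  -- enumerate each network (augmented by `∅` to ensure nonemptiness)
  have henum : ∀ i, ∃ g : ℕ → Set (X i), insert ∅ (N i) = Set.range g := fun i =>
    ((hNcount i).insert ∅).exists_eq_range ⟨∅, mem_insert _ _⟩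
  choose Nf hNf using henum
  -- the embedding of each summand
  set emb : ∀ i, X i → OnePoint (Σ i, X i) :=
    fun i x => ((⟨i, x⟩ : Σ i, X i) : OnePoint (Σ i, X i)) with hemb
  have embcont : ∀ i, Continuous (emb i) := fun i =>
    OnePoint.continuous_coe.comp continuous_sigmaMk
  -- the prefix predicate
  set Pre : List Bool → ι → Prop :=
    fun l j => ∀ t (ht : t < l.length), f j t = l.get ⟨t, ht⟩ with hPre
  -- the network element associated to a finite string and an index
  set gset : List Bool × ℕ → Set (OnePoint (Σ i, X i)) :=
    fun p => insert OnePoint.infty (⋃ j ∈ {j | Pre p.1 j}, emb j '' Nf j p.2) with hgset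
  refine ⟨insert {OnePoint.infty}
      {s | ∃ i, ∃ c ∈ C i, s = insert OnePoint.infty (emb i '' c)},
    insert {OnePoint.infty} (Set.range gset), ?_, ?_, ?_, ?_⟩
  · -- cover
    apply eq_univ_of_forall
    intro x
    cases x with
    | infty => exact ⟨{OnePoint.infty}, mem_insert _ _, rfl⟩
    | coe y =>
      rcases y with ⟨i, z⟩
      have : z ∈ ⋃₀ C i := (hCcov i).symm ▸ mem_univ z
      rcases this with ⟨c, hc, hzc⟩
      exact ⟨insert OnePoint.infty (emb i '' c), Or.inr ⟨i, c, hc, rfl⟩,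
        mem_insert_of_mem _ ⟨z, hzc, rfl⟩⟩
  · -- cardinalities
    rintro c (rfl | ⟨i, c₀, hc₀, rfl⟩)
    · exact ⟨finite_singleton _, by simp⟩
    · have hfin : (emb i '' c₀).Finite := (hCcard i c₀ hc₀).1.image _
      refine ⟨hfin.insert _, ?_⟩
      calc (insert OnePoint.infty (emb i '' c₀)).ncard ≤ (emb i '' c₀).ncard + 1 :=
            Set.ncard_insert_le _ _
        _ ≤ c₀.ncard + 1 := by
            have := Set.ncard_image_le (f := emb i) (hCcard i c₀ hc₀).1
            omega
        _ ≤ n + 1 := by have := (hCcard i c₀ hc₀).2; omega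
  · -- countability
    exact (countable_range gset).insert _
  · -- network property
    rintro c (rfl | ⟨i, c₀, hc₀, rfl⟩) U hU hcU
    · exact ⟨{OnePoint.infty}, mem_insert _ _, Subset.rfl, hcU⟩
    have hinfU : OnePoint.infty ∈ U := hcU (mem_insert _ _)
    -- trace of U on the i-th summand
    set V : Set (X i) := emb i ⁻¹' U with hV
    have hVopen : IsOpen V := hU.preimage (embcont i)
    have hc₀V : c₀ ⊆ V := fun z hz => hcU (mem_insert_of_mem _ ⟨z, hz, rfl⟩)
    obtain ⟨N₀, hN₀mem, hc₀N₀, hN₀V⟩ := hNet i c₀ hc₀ V hVopen hc₀V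
    obtain ⟨k, hk⟩ : ∃ k, Nf i k = N₀ := by
      have : N₀ ∈ insert ∅ (N i) := mem_insert_of_mem _ hN₀mem
      rw [hNf i] at this
      rcases this with ⟨k, hk⟩
      exact ⟨k, hk⟩
    -- the compact complement and the bad finite set of indices
    have hKcomp : IsCompact (((↑) ⁻¹' U : Set (Σ i, X i))ᶜ) :=
      ((OnePoint.isOpen_iff_of_mem' hinfU).mp hU).1
    obtain ⟨G, hG⟩ := hKcomp.elim_finite_subcover (fun j => range (Sigma.mk j))
      (fun j => isOpen_range_sigmaMk)
      (fun ⟨j, z⟩ _ => mem_iUnion.mpr ⟨j, ⟨z, rfl⟩⟩)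
    have hgood : ∀ j ∉ G, ∀ z : X j, emb j z ∈ U := by
      intro j hj z
      by_contra hcon
      have : (⟨j, z⟩ : Σ i, X i) ∈ (((↑) ⁻¹' U : Set (Σ i, X i))ᶜ) := hcon
      have := hG this
      rcases mem_iUnion₂.mp this with ⟨j', hj', z', hz'⟩
      have : j' = j := congrArg Sigma.fst hz'
      exact hj (this ▸ hj')
    -- choose a prefix length separating i from the other bad indices
    set S : Finset ι := G.erase i with hS
    have hwit : ∀ j : {j // j ∈ S}, ∃ t, f j.1 t ≠ f i t := by
      rintro ⟨j, hj⟩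
      have hne : j ≠ i := Finset.ne_of_mem_erase hj
      by_contra hcon
      push_neg at hcon
      exact hne (f.injective (funext hcon))
    choose tw htw using hwit
    set m : ℕ := Finset.univ.sup (fun j : {j // j ∈ S} => tw j + 1) with hm
    have hmlt : ∀ j : {j // j ∈ S}, tw j < m := fun j =>
      Nat.lt_of_lt_of_le (Nat.lt_succ_self _)
        (Finset.le_sup (f := fun j : {j // j ∈ S} => tw j + 1) (Finset.mem_univ j))
    set l : List Bool := List.ofFn (fun t : Fin m => f i t) with hl
    have hlen : l.length = m := List.length_ofFn
    have hlget : ∀ t (ht : t < l.length), l.get ⟨t, ht⟩ = f i t := by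
      intro t ht
      simp [hl, List.get_ofFn]
    have hPrei : Pre l i := fun t ht => (hlget t ht).symm
    refine ⟨gset (l, k), mem_insert_of_mem _ ⟨(l, k), rfl⟩, ?_, ?_⟩
    · -- c ⊆ gset (l, k)
      rintro x (rfl | ⟨z, hz, rfl⟩)
      · exact mem_insert _ _
      · refine mem_insert_of_mem _ (mem_biUnion hPrei ⟨z, ?_, rfl⟩)
        exact hk ▸ hc₀N₀ hz
    · -- gset (l, k) ⊆ U
      rintro x (rfl | hx)
      · exact hinfU
      rcases mem_iUnion₂.mp hx with ⟨j, hj, z, hz, rfl⟩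
      by_cases hji : j = i
      · subst hji
        have : z ∈ V := hN₀V (hk ▸ hz)
        exact this
      · have hjS : j ∉ S := by
          intro hjS
          have := htw ⟨j, hjS⟩
          exact this (hj (tw ⟨j, hjS⟩) (hlen ▸ hmlt ⟨j, hjS⟩) |>.trans
            (hlget _ (hlen ▸ hmlt ⟨j, hjS⟩)))
        have hjG : j ∉ G := fun hjG => hjS (Finset.mem_erase.mpr ⟨hji, hjG⟩)
        exact hgood j hjG z
end

section
/- Let X be a Hausdorff space, let C₁ and C₂ be covers of X by finite subsets, and let N₁ and N₂ be networks with respect to C₁ and C₂ respectively. Then the family N₁ ∧ N₂ = {N₁ ∩ N₂ : N₁ ∈ N₁, N₂ ∈ N₂} is a network with respect to the cover C₁ ∧ C₂ = {C₁ ∩ C₂ : C₁ ∈ C₁, C₂ ∈ C₂}. -/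
open Set TopologicalSpace

/-- if `C₁, C₂` are covers of a Hausdorff space `X` by finite sets, and
`N₁, N₂` are networks with respect to `C₁, C₂`, then `N₁ ∧ N₂ = {n₁ ∩ n₂}` is a network
with respect to `C₁ ∧ C₂ = {c₁ ∩ c₂}`. -/
theorem stmt12 {X : Type*} [TopologicalSpace X] [T2Space X]
    (C₁ C₂ N₁ N₂ : Set (Set X))
    (hc1 : ⋃₀ C₁ = univ) (hc2 : ⋃₀ C₂ = univ)
    (hf1 : ∀ c ∈ C₁, c.Finite) (hf2 : ∀ c ∈ C₂, c.Finite)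
    (hn1 : IsNetworkWith N₁ C₁) (hn2 : IsNetworkWith N₂ C₂) :
    IsNetworkWith {m | ∃ a ∈ N₁, ∃ b ∈ N₂, m = a ∩ b}
      {m | ∃ a ∈ C₁, ∃ b ∈ C₂, m = a ∩ b} := by
  rintro c ⟨c₁, hc₁, c₂, hc₂, rfl⟩ U hU hcU
  -- Separate the finite disjoint sets c₁ \ U and c₂ \ U
  have hA : IsCompact (c₁ \ U) := ((hf1 c₁ hc₁).diff (t := U)).isCompact
  have hB : IsCompact (c₂ \ U) := ((hf2 c₂ hc₂).diff (t := U)).isCompact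
  have hdisj : Disjoint (c₁ \ U) (c₂ \ U) := by
    rw [disjoint_left]
    rintro x ⟨hx1, hxU⟩ ⟨hx2, _⟩
    exact hxU (hcU ⟨hx1, hx2⟩)
  obtain ⟨V, W, hV, hW, hAV, hBW, hVW⟩ :=
    SeparatedNhds.of_isCompact_isCompact hA hB hdisj
  obtain ⟨n₁, hn₁, hc₁n, hnU₁⟩ := hn1 c₁ hc₁ (U ∪ V) (hU.union hV)
    (fun x hx => by by_cases h : x ∈ U
                    · exact Or.inl h
                    · exact Or.inr (hAV ⟨hx, h⟩))
  obtain ⟨n₂, hn₂, hc₂n, hnU₂⟩ := hn2 c₂ hc₂ (U ∪ W) (hU.union hW)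
    (fun x hx => by by_cases h : x ∈ U
                    · exact Or.inl h
                    · exact Or.inr (hBW ⟨hx, h⟩))
  refine ⟨n₁ ∩ n₂, ⟨n₁, hn₁, n₂, hn₂, rfl⟩, inter_subset_inter hc₁n hc₂n, ?_⟩
  rintro x ⟨hx1, hx2⟩
  rcases hnU₁ hx1 with h | hxV
  · exact h
  rcases hnU₂ hx2 with h | hxW
  · exact h
  exact absurd (Set.disjoint_left.mp hVW hxV hxW) (fun h => h)
end

section
/- Let A(ω₂) denote the one-point compactification of a discrete space of cardinality ℵ₂. Then the square A(ω₂) × A(ω₂) does not belong to LΣ(≤3): there is no cover of A(ω₂)² by subsets of cardinality at most 3 admitting a countable network. -/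
open Set TopologicalSpace

section Aux

open OnePoint

set_option linter.unusedSectionVars false

variable {D : Type*} [TopologicalSpace D] [DiscreteTopology D]

/-- Canonical neighborhood of `x` avoiding the finite set `F` (except at `x` itself). -/
def Vnb (F : Set D) (x : OnePoint D) : Set (OnePoint D) :=
  {y | y = x ∨ (x = (∞ : OnePoint D) ∧ ∃ a, a ∉ F ∧ y = (a : OnePoint D))}

lemma mem_Vnb_self (F : Set D) (x : OnePoint D) : x ∈ Vnb F x := Or.inl rfl

lemma Vnb_coe {F : Set D} (x : D) : Vnb F (x : OnePoint D) = {(x : OnePoint D)} := by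
  ext y
  simp only [Vnb, mem_setOf_eq, mem_singleton_iff]
  constructor
  · rintro (h | ⟨h, _⟩)
    · exact h
    · exact absurd h (coe_ne_infty x)
  · exact fun h => Or.inl h

lemma Vnb_infty_preimage_compl {F : Set D} :
    (((↑) : D → OnePoint D) ⁻¹' Vnb F (∞ : OnePoint D))ᶜ = F := by
  ext a
  simp only [Vnb, mem_compl_iff, mem_preimage, mem_setOf_eq]
  constructor
  · intro h
    by_contra haF
    exact h (Or.inr ⟨trivial, a, haF, rfl⟩)
  · rintro haF (h | ⟨_, b, hb, hab⟩)
    · exact coe_ne_infty a h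
    · rw [coe_eq_coe] at hab
      exact hb (hab ▸ haF)

lemma Vnb_isOpen {F : Set D} (hF : F.Finite) (x : OnePoint D) : IsOpen (Vnb F x) := by
  induction x with
  | infty =>
    rw [OnePoint.isOpen_def]
    refine ⟨fun _ => ?_, isOpen_discrete _⟩
    rw [Vnb_infty_preimage_compl]
    exact hF.isCompact
  | coe x =>
    rw [Vnb_coe, OnePoint.isOpen_def]
    refine ⟨fun h => absurd h.symm (coe_ne_infty x), isOpen_discrete _⟩

lemma coe_mem_Vnb {F : Set D} {x : OnePoint D} {a : D} (h : (a : OnePoint D) ∈ Vnb F x) :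
    x = (a : OnePoint D) ∨ (x = (∞ : OnePoint D) ∧ a ∉ F) := by
  rcases h with h | ⟨hx, b, hb, hab⟩
  · exact Or.inl h.symm
  · rw [coe_eq_coe] at hab
    exact Or.inr ⟨hx, hab ▸ hb⟩

lemma infty_mem_Vnb {F : Set D} {x : OnePoint D} (h : (∞ : OnePoint D) ∈ Vnb F x) :
    x = (∞ : OnePoint D) := by
  rcases h with h | ⟨hx, b, _, hab⟩
  · exact h.symm
  · exact absurd hab (infty_ne_coe b)

/-- Canonical open set around a cover set `c` avoiding the finite set `F`. -/
def Unb (F : Set D) (c : Set (OnePoint D × OnePoint D)) : Set (OnePoint D × OnePoint D) :=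
  ⋃ z ∈ c, (Vnb F z.1) ×ˢ (Vnb F z.2)

lemma Unb_isOpen {F : Set D} (hF : F.Finite) (c : Set (OnePoint D × OnePoint D)) :
    IsOpen (Unb F c) :=
  isOpen_biUnion fun _ _ => (Vnb_isOpen hF _).prod (Vnb_isOpen hF _)

lemma subset_Unb (F : Set D) (c : Set (OnePoint D × OnePoint D)) : c ⊆ Unb F c :=
  fun z hz => mem_biUnion hz ⟨mem_Vnb_self F z.1, mem_Vnb_self F z.2⟩

/-- Row lemma: if `a ∈ F` and `(↑a, ∞) ∉ c`, then any point `(↑a, ↑b)` of `Unb F c`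
actually belongs to `c`. -/
lemma row_lemma {F : Set D} {c : Set (OnePoint D × OnePoint D)} {a b : D}
    (haF : a ∈ F) (hrow : ((a : OnePoint D), (∞ : OnePoint D)) ∉ c)
    (h : ((a : OnePoint D), (b : OnePoint D)) ∈ Unb F c) :
    ((a : OnePoint D), (b : OnePoint D)) ∈ c := by
  rcases mem_iUnion₂.mp h with ⟨z, hzc, hz1, hz2⟩
  have h1 : z.1 = (a : OnePoint D) := by
    rcases coe_mem_Vnb hz1 with h | ⟨_, hna⟩
    · exact h
    · exact absurd haF hna
  have h2 : z.2 = (b : OnePoint D) := by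
    rcases coe_mem_Vnb hz2 with h | ⟨hinf, _⟩
    · exact h
    · exact absurd hzc (by rw [← h1, ← hinf] at hrow; exact (by simpa using hrow))
  have : z = ((a : OnePoint D), (b : OnePoint D)) := Prod.ext h1 h2
  exact this ▸ hzc

/-- Column lemma, symmetric. -/
lemma col_lemma {F : Set D} {c : Set (OnePoint D × OnePoint D)} {a b : D}
    (hbF : b ∈ F) (hcol : ((∞ : OnePoint D), (b : OnePoint D)) ∉ c)
    (h : ((a : OnePoint D), (b : OnePoint D)) ∈ Unb F c) :
    ((a : OnePoint D), (b : OnePoint D)) ∈ c := by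
  rcases mem_iUnion₂.mp h with ⟨z, hzc, hz1, hz2⟩
  have h2 : z.2 = (b : OnePoint D) := by
    rcases coe_mem_Vnb hz2 with h | ⟨_, hnb⟩
    · exact h
    · exact absurd hbF hnb
  have h1 : z.1 = (a : OnePoint D) := by
    rcases coe_mem_Vnb hz1 with h | ⟨hinf, _⟩
    · exact h
    · exact absurd hzc (by rw [← h2, ← hinf] at hcol; exact (by simpa using hcol))
  have : z = ((a : OnePoint D), (b : OnePoint D)) := Prod.ext h1 h2
  exact this ▸ hzc

/-- The countable "row trace" set attached to a countable network family. -/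
def gset (𝒩 : Set (Set (OnePoint D × OnePoint D))) (a : D) : Set D :=
  {b | ∃ N ∈ 𝒩, ((fun b' : D => ((a : OnePoint D), (b' : OnePoint D))) ⁻¹' N).Finite ∧
      ((a : OnePoint D), (b : OnePoint D)) ∈ N}

def hset (𝒩 : Set (Set (OnePoint D × OnePoint D))) (b : D) : Set D :=
  {a | ∃ N ∈ 𝒩, ((fun a' : D => ((a' : OnePoint D), (b : OnePoint D))) ⁻¹' N).Finite ∧
      ((a : OnePoint D), (b : OnePoint D)) ∈ N}

lemma gset_countable {𝒩 : Set (Set (OnePoint D × OnePoint D))} (h𝒩 : 𝒩.Countable) (a : D) :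
    (gset 𝒩 a).Countable := by
  have : gset 𝒩 a ⊆ ⋃ N ∈ 𝒩,
      {b | ((fun b' : D => ((a : OnePoint D), (b' : OnePoint D))) ⁻¹' N).Finite ∧
        ((a : OnePoint D), (b : OnePoint D)) ∈ N} := by
    rintro b ⟨N, hN, hfin, hmem⟩
    exact mem_biUnion hN ⟨hfin, hmem⟩
  refine Set.Countable.mono this (Set.Countable.biUnion h𝒩 fun N _ => ?_)
  by_cases hfin : ((fun b' : D => ((a : OnePoint D), (b' : OnePoint D))) ⁻¹' N).Finite
  · exact (hfin.subset (fun b hb => hb.2)).countable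
  · exact Set.Countable.mono (fun b hb => absurd hb.1 hfin) countable_empty

lemma hset_countable {𝒩 : Set (Set (OnePoint D × OnePoint D))} (h𝒩 : 𝒩.Countable) (b : D) :
    (hset 𝒩 b).Countable := by
  have : hset 𝒩 b ⊆ ⋃ N ∈ 𝒩,
      {a | ((fun a' : D => ((a' : OnePoint D), (b : OnePoint D))) ⁻¹' N).Finite ∧
        ((a : OnePoint D), (b : OnePoint D)) ∈ N} := by
    rintro a ⟨N, hN, hfin, hmem⟩
    exact mem_biUnion hN ⟨hfin, hmem⟩
  refine Set.Countable.mono this (Set.Countable.biUnion h𝒩 fun N _ => ?_)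
  by_cases hfin : ((fun a' : D => ((a' : OnePoint D), (b : OnePoint D))) ⁻¹' N).Finite
  · exact (hfin.subset (fun a ha => ha.2)).countable
  · exact Set.Countable.mono (fun a ha => absurd ha.1 hfin) countable_empty

/-- Pin lemma: the canonical open set around the triple `{(a,b),(a,∞),(∞,b)}` contains
`(a',∞)` only for `a' = a`. -/
lemma pin_fst {F : Set D} {a b a' : D}
    (h : ((a' : OnePoint D), (∞ : OnePoint D)) ∈
      Unb F ({((a : OnePoint D), (b : OnePoint D)), ((a : OnePoint D), (∞ : OnePoint D)),
        ((∞ : OnePoint D), (b : OnePoint D))} : Set (OnePoint D × OnePoint D))) :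
    a' = a := by
  rcases mem_iUnion₂.mp h with ⟨z, hzc, hz1, hz2⟩
  have h2 : z.2 = (∞ : OnePoint D) := infty_mem_Vnb hz2
  rcases hzc with hz | hz | hz
  · rw [hz] at h2; exact absurd h2 (coe_ne_infty b)
  · rw [hz] at hz1
    rcases coe_mem_Vnb hz1 with h | ⟨hh, _⟩
    · exact (coe_eq_coe.mp h).symm
    · exact absurd hh (coe_ne_infty a)
  · rw [hz] at h2; exact absurd h2 (coe_ne_infty b)

lemma pin_snd {F : Set D} {a b b' : D}
    (h : ((∞ : OnePoint D), (b' : OnePoint D)) ∈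
      Unb F ({((a : OnePoint D), (b : OnePoint D)), ((a : OnePoint D), (∞ : OnePoint D)),
        ((∞ : OnePoint D), (b : OnePoint D))} : Set (OnePoint D × OnePoint D))) :
    b' = b := by
  rcases mem_iUnion₂.mp h with ⟨z, hzc, hz1, hz2⟩
  have h1 : z.1 = (∞ : OnePoint D) := infty_mem_Vnb hz1
  rcases hzc with hz | hz | hz
  · rw [hz] at h1; exact absurd h1 (coe_ne_infty a)
  · rw [hz] at h1; exact absurd h1 (coe_ne_infty a)
  · rw [hz] at hz2
    rcases coe_mem_Vnb hz2 with h | ⟨hh, _⟩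
    · exact (coe_eq_coe.mp h).symm
    · exact absurd hh (coe_ne_infty b)

open Cardinal in
lemma counting {E : Type*} (hE : Cardinal.mk E = Cardinal.aleph 2)
    (g h : E → Set E) (T : Set (E × E))
    (hg : ∀ a, (g a).Countable) (hh : ∀ b, (h b).Countable) (hT : T.Countable)
    (htri : ∀ a b, b ∈ g a ∨ a ∈ h b ∨ (a, b) ∈ T) : False := by
  obtain ⟨A, hA⟩ : ∃ A : Set E, #A = Cardinal.aleph 1 :=
    le_mk_iff_exists_set.mp (by rw [hE]; exact aleph_le_aleph.mpr one_le_two)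
  set B : Set E := (⋃ a ∈ A, g a) ∪ (Prod.snd '' T) with hBdef
  have hB : #B ≤ Cardinal.aleph 1 := by
    refine (mk_union_le _ _).trans ?_
    have h1 : #(⋃ a ∈ A, g a) ≤ Cardinal.aleph 1 := by
      refine (mk_biUnion_le g A).trans ?_
      have hsup : ⨆ x : A, #(g x.1) ≤ ℵ₀ :=
        ciSup_le' fun x => mk_le_aleph0_iff.mpr (hg x.1).to_subtype
      calc #A * ⨆ x : A, #(g x.1) ≤ Cardinal.aleph 1 * ℵ₀ := by
            exact mul_le_mul' (le_of_eq hA) hsup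
        _ = Cardinal.aleph 1 := by
            rw [mul_eq_max (aleph0_le_aleph 1) le_rfl]
            exact max_eq_left (aleph0_le_aleph 1)
    have h2 : #(Prod.snd '' T : Set E) ≤ ℵ₀ :=
      mk_le_aleph0_iff.mpr (hT.image Prod.snd).to_subtype
    calc #(⋃ a ∈ A, g a) + #(Prod.snd '' T : Set E)
        ≤ Cardinal.aleph 1 + ℵ₀ := add_le_add h1 h2
      _ ≤ Cardinal.aleph 1 + Cardinal.aleph 1 := add_le_add le_rfl (aleph0_le_aleph 1)
      _ = Cardinal.aleph 1 := by
          rw [add_eq_max (aleph0_le_aleph 1)]; exact max_self _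
  have hBne : B ≠ Set.univ := by
    intro hBu
    have : #E ≤ Cardinal.aleph 1 := by
      rw [← mk_univ (α := E), ← hBu]; exact hB
    rw [hE] at this
    exact absurd this (not_le.mpr (aleph_lt_aleph.mpr one_lt_two))
  obtain ⟨b, hb⟩ : ∃ b, b ∉ B := by
    by_contra hcon
    push_neg at hcon
    exact hBne (eq_univ_of_forall hcon)
  obtain ⟨a, haA, hah⟩ : ∃ a ∈ A, a ∉ h b := by
    by_contra hcon
    push_neg at hcon
    have : #A ≤ ℵ₀ := by
      refine le_trans (mk_le_mk_of_subset hcon) ?_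
      exact mk_le_aleph0_iff.mpr (hh b).to_subtype
    rw [hA] at this
    exact absurd this (not_le.mpr (by rw [← aleph_zero]; exact aleph_lt_aleph.mpr zero_lt_one))
  rcases htri a b with hgb | hhb | hTb
  · exact hb (mem_union_left _ (mem_biUnion haA hgb))
  · exact hah hhb
  · exact hb (mem_union_right _ ⟨(a, b), hTb, rfl⟩)


end Aux

open OnePoint

set_option maxHeartbeats 1000000

/-- `A(ω₂) × A(ω₂) ∉ LΣ(≤3)`, where `A(ω₂)` is the one-point
compactification of a discrete space of cardinality `ℵ₂`. -/
theorem stmt13 (D : Type*) [TopologicalSpace D] [DiscreteTopology D]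
    (hD : Cardinal.mk D = Cardinal.aleph 2) :
    ¬ LSigmaLeN 3 (OnePoint D × OnePoint D) := by
  rintro ⟨C, 𝒩, hcover, hsize, hcnt, hnet⟩
  classical
  have hcov : ∀ p : D × D, ∃ c, c ∈ C ∧ ((p.1 : OnePoint D), (p.2 : OnePoint D)) ∈ c := by
    intro p
    have h1 : ((p.1 : OnePoint D), (p.2 : OnePoint D)) ∈ ⋃₀ C := by
      rw [hcover]; exact mem_univ _
    rcases mem_sUnion.mp h1 with ⟨c, hc, hm⟩
    exact ⟨c, hc, hm⟩
  choose cov hcovC hcovmem using hcov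
  have hFfin : ∀ p : D × D, ({p.1, p.2} : Set D).Finite := fun p =>
    (finite_singleton _).insert _
  have hserve : ∀ p : D × D, ∃ N, N ∈ 𝒩 ∧ cov p ⊆ N ∧ N ⊆ Unb {p.1, p.2} (cov p) := by
    intro p
    rcases hnet (cov p) (hcovC p) (Unb {p.1, p.2} (cov p)) (Unb_isOpen (hFfin p) _)
      (subset_Unb _ _) with ⟨N, h1, h2, h3⟩
    exact ⟨N, h1, h2, h3⟩
  choose Np hNp𝒩 hNpsub hNpU using hserve
  set T : Set (D × D) := {p | ((p.1 : OnePoint D), (∞ : OnePoint D)) ∈ cov p ∧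
    ((∞ : OnePoint D), (p.2 : OnePoint D)) ∈ cov p} with hTdef
  have htri : ∀ a b : D, b ∈ gset 𝒩 a ∨ a ∈ hset 𝒩 b ∨ (a, b) ∈ T := by
    intro a b
    by_cases hr : ((a : OnePoint D), (∞ : OnePoint D)) ∈ cov (a, b)
    · by_cases hcN : ((∞ : OnePoint D), (b : OnePoint D)) ∈ cov (a, b)
      · exact Or.inr (Or.inr ⟨hr, hcN⟩)
      · refine Or.inr (Or.inl ⟨Np (a, b), hNp𝒩 (a, b), ?_, hNpsub (a, b) (hcovmem (a, b))⟩)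
        have hsub : (fun a' : D => ((a' : OnePoint D), (b : OnePoint D))) ⁻¹' (Np (a, b)) ⊆
            (fun a' : D => ((a' : OnePoint D), (b : OnePoint D))) ⁻¹' (cov (a, b)) := by
          intro a' ha'
          exact col_lemma (show b ∈ ({a, b} : Set D) from mem_insert_of_mem _ rfl) hcN
            (hNpU (a, b) ha')
        refine Set.Finite.subset ?_ hsub
        refine Set.Finite.preimage ?_ (hsize _ (hcovC (a, b))).1
        intro x _ y _ hxy
        exact coe_eq_coe.mp (congrArg Prod.fst hxy)
    · refine Or.inl ⟨Np (a, b), hNp𝒩 (a, b), ?_, hNpsub (a, b) (hcovmem (a, b))⟩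
      have hsub : (fun b' : D => ((a : OnePoint D), (b' : OnePoint D))) ⁻¹' (Np (a, b)) ⊆
          (fun b' : D => ((a : OnePoint D), (b' : OnePoint D))) ⁻¹' (cov (a, b)) := by
        intro b' hb'
        exact row_lemma (show a ∈ ({a, b} : Set D) from mem_insert _ _) hr (hNpU (a, b) hb')
      refine Set.Finite.subset ?_ hsub
      refine Set.Finite.preimage ?_ (hsize _ (hcovC (a, b))).1
      intro x _ y _ hxy
      exact coe_eq_coe.mp (congrArg Prod.snd hxy)
  have hTcnt : T.Countable := by
    have hinj : Set.InjOn Np T := by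
      intro p hp q hq hpq
      obtain ⟨hpr, hpc⟩ := hp
      obtain ⟨hqr, hqc⟩ := hq
      have hptriple : cov p = {((p.1 : OnePoint D), (p.2 : OnePoint D)),
          ((p.1 : OnePoint D), (∞ : OnePoint D)), ((∞ : OnePoint D), (p.2 : OnePoint D))} := by
        refine (Set.eq_of_subset_of_ncard_le ?_ ?_ (hsize _ (hcovC p)).1).symm
        · rw [insert_subset_iff, insert_subset_iff, singleton_subset_iff]
          exact ⟨hcovmem p, hpr, hpc⟩
        · refine le_trans (hsize _ (hcovC p)).2 (le_of_eq ?_)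
          symm
          rw [Set.ncard_eq_three]
          refine ⟨_, _, _, ?_, ?_, ?_, rfl⟩
          · exact fun h => coe_ne_infty p.2 (congrArg Prod.snd h)
          · exact fun h => coe_ne_infty p.1 (congrArg Prod.fst h)
          · exact fun h => coe_ne_infty p.1 (congrArg Prod.fst h)
      have hsubq : cov q ⊆ Np p := by rw [hpq]; exact hNpsub q
      have hq1 : ((q.1 : OnePoint D), (∞ : OnePoint D)) ∈ Unb {p.1, p.2} (cov p) :=
        hNpU p (hsubq hqr)
      have hq2 : ((∞ : OnePoint D), (q.2 : OnePoint D)) ∈ Unb {p.1, p.2} (cov p) :=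
        hNpU p (hsubq hqc)
      rw [hptriple] at hq1 hq2
      exact Prod.ext (pin_fst hq1).symm (pin_snd hq2).symm
    exact MapsTo.countable_of_injOn (fun p _ => hNp𝒩 p) hinj hcnt
  exact counting hD (gset 𝒩) (hset 𝒩) T (fun a => gset_countable hcnt a)
    (fun b => hset_countable hcnt b) hTcnt htri
end

section
/- Suppose X is a topological space in LΣ(<ω), i.e., there exist a second-countable space M and a finite-valued upper semicontinuous multivalued mapping p : M → X with ⋃{p(m) : m ∈ M} = X. Then there are subspaces X_n ⊆ X for n ∈ ω such that X_n ∈ LΣ(≤n) for each n and X = ⋃_{n∈ω} X_n. -/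
open Set TopologicalSpace

/-- if `X ∈ LΣ(<ω)`, witnessed by a finite-valued usc map `p` onto `X`
from a second-countable space `M`, then `X = ⋃_{n∈ω} X_n` with each `X_n ∈ LΣ(≤n)`. -/
theorem stmt14 {X : Type*} [TopologicalSpace X]
    (M : Type*) [TopologicalSpace M] [SecondCountableTopology M]
    (p : M → Set X) (hfin : ∀ m, (p m).Finite)
    (husc : ∀ V : Set X, IsOpen V → IsOpen {m | p m ⊆ V})
    (honto : (⋃ m, p m) = univ) :
    ∃ Xn : ℕ → Set X, (∀ n, LSigmaLeN n ↥(Xn n)) ∧ (⋃ n, Xn n) = univ := by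
  refine ⟨fun n => ⋃ m ∈ {m | (p m).ncard ≤ n}, p m, fun n => ?_, ?_⟩
  · set Xn : Set X := ⋃ m ∈ {m | (p m).ncard ≤ n}, p m with hXn
    have hsub : ∀ m, (p m).ncard ≤ n → p m ⊆ Xn := fun m hm =>
      subset_biUnion_of_mem (u := fun m => p m) hm
    refine ⟨{c | ∃ m, (p m).ncard ≤ n ∧ c = (Subtype.val : Xn → X) ⁻¹' p m},
      {s | ∃ B ∈ countableBasis M,
        s = (Subtype.val : Xn → X) ⁻¹' (⋃ m ∈ B, p m)}, ?_, ?_, ?_, ?_⟩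
    · ext x
      simp only [mem_sUnion, mem_setOf_eq, mem_univ, iff_true]
      obtain ⟨m, hm, hx⟩ := mem_iUnion₂.mp x.2
      exact ⟨_, ⟨m, hm, rfl⟩, hx⟩
    · rintro c ⟨m, hm, rfl⟩
      have hf : ((Subtype.val : Xn → X) ⁻¹' p m).Finite :=
        (hfin m).preimage Subtype.val_injective.injOn
      constructor
      · exact hf
      · calc ((Subtype.val : Xn → X) ⁻¹' p m).ncard
            = ((Subtype.val : Xn → X) '' ((Subtype.val : Xn → X) ⁻¹' p m)).ncard :=
              (ncard_image_of_injective _ Subtype.val_injective).symm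
          _ ≤ (p m).ncard := ncard_le_ncard (image_preimage_subset _ _) (hfin m)
          _ ≤ n := hm
    · have : {s | ∃ B ∈ countableBasis M,
          s = (Subtype.val : Xn → X) ⁻¹' (⋃ m ∈ B, p m)}
          = (fun B : Set M => (Subtype.val : Xn → X) ⁻¹' (⋃ m ∈ B, p m)) '' countableBasis M := by
        ext s
        simp only [mem_setOf_eq, mem_image]
        exact ⟨fun ⟨B, hB, h⟩ => ⟨B, hB, h.symm⟩, fun ⟨B, hB, h⟩ => ⟨B, hB, h.symm⟩⟩
      rw [this]
      exact (countable_countableBasis M).image _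
    · rintro c ⟨m, hm, rfl⟩ U hU hcU
      obtain ⟨V, hV, rfl⟩ := isOpen_induced_iff.mp hU
      have hpV : p m ⊆ V := by
        intro x hx
        have hx' : (⟨x, hsub m hm hx⟩ : Xn) ∈ (Subtype.val : Xn → X) ⁻¹' p m := hx
        exact hcU hx'
      have hopen : IsOpen {m' | p m' ⊆ V} := husc V hV
      obtain ⟨B, hB, hmB, hBsub⟩ :=
        (isBasis_countableBasis M).exists_subset_of_mem_open hpV hopen
      refine ⟨(Subtype.val : Xn → X) ⁻¹' (⋃ m' ∈ B, p m'), ⟨B, hB, rfl⟩, ?_, ?_⟩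
      · intro x hx
        exact mem_preimage.mpr (mem_iUnion₂.mpr ⟨m, hmB, hx⟩)
      · intro x hx
        obtain ⟨m', hm', hxm'⟩ := mem_iUnion₂.mp (mem_preimage.mp hx)
        exact mem_preimage.mpr (hBsub hm' hxm')
  · rw [eq_univ_iff_forall]
    intro x
    have : x ∈ ⋃ m, p m := honto ▸ mem_univ x
    obtain ⟨m, hm⟩ := mem_iUnion.mp this
    exact mem_iUnion.mpr ⟨(p m).ncard, mem_iUnion₂.mpr ⟨m, show (p m).ncard ≤ (p m).ncard from le_rfl, hm⟩⟩
end

section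
/- Let X be a topological space such that the countable power X^ω belongs to LΣ(<ω) (X^ω admits a cover by finite subsets with a countable network). Then there exists n ∈ ω such that X^ω ∈ LΣ(≤n). -/
open Set TopologicalSpace

/-- `X ∈ LΣ(<ω)`: `X` has a cover by finite sets admitting a countable network. -/
def LSigmaFin (X : Type*) [TopologicalSpace X] : Prop :=
  ∃ C N : Set (Set X), ⋃₀ C = univ ∧ (∀ c ∈ C, c.Finite) ∧
    N.Countable ∧ IsNetworkWith N C

/-- if `X^ω ∈ LΣ(<ω)`, then `X^ω ∈ LΣ(≤n)` for some `n ∈ ω`. -/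
theorem stmt15 {X : Type*} [TopologicalSpace X] (h : LSigmaFin (ℕ → X)) :
    ∃ n : ℕ, LSigmaLeN n (ℕ → X) := by
  obtain ⟨C, N, hcov, hfin, hcount, hnet⟩ := h
  -- the "self-product" maps: e m extracts the m-th interleaved copy
  set e : ℕ → (ℕ → X) → (ℕ → X) := fun m z k => z (Nat.pair m k) with he
  have hec : ∀ m, Continuous (e m) := fun m => continuous_pi fun k => continuous_apply _
  -- the candidate countable network
  set M : Set (Set (ℕ → X)) := ⋃ m : ℕ, (Set.image (e m)) '' N with hM
  have hMc : M.Countable := countable_iUnion fun m => hcount.image _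
  have key : ∃ n : ℕ, ∀ z : ℕ → X, ∃ F : Set (ℕ → X), z ∈ F ∧ F.Finite ∧ F.ncard ≤ n ∧
      ∀ U : Set (ℕ → X), IsOpen U → F ⊆ U → ∃ t ∈ M, F ⊆ t ∧ t ⊆ U := by
    by_contra hcon
    push_neg at hcon
    choose zs hzs using hcon
    -- encode all the witnesses into a single point
    set w : ℕ → X := fun j => zs (Nat.unpair j).1 (Nat.unpair j).2 with hwdef
    have hw : ∀ m, e m w = zs m := by
      intro m; funext k; simp [he, hwdef, Nat.unpair_pair]
    obtain ⟨D, hD, hwD⟩ : ∃ D ∈ C, w ∈ D := by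
      have : w ∈ ⋃₀ C := by rw [hcov]; exact mem_univ w
      exact this
    set m := D.ncard with hm
    have hDfin : D.Finite := hfin D hD
    -- F := e m '' D is a good finite set of size ≤ m for zs m : contradiction
    have hFmem : zs m ∈ e m '' D := ⟨w, hwD, hw m⟩
    have hFfin : (e m '' D).Finite := hDfin.image _
    have hFcard : (e m '' D).ncard ≤ m := Set.ncard_image_le hDfin
    obtain ⟨U, hU, hFU, hbad⟩ := hzs m (e m '' D) hFmem hFfin hFcard
    have hpre : D ⊆ (e m) ⁻¹' U := Set.image_subset_iff.mp hFU
    obtain ⟨t, htN, hDt, htU⟩ := hnet D hD ((e m) ⁻¹' U) (hU.preimage (hec m)) hpre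
    have htM : e m '' t ∈ M := mem_iUnion.2 ⟨m, Set.mem_image_of_mem _ htN⟩
    have h1 : e m '' D ⊆ e m '' t := Set.image_mono hDt
    have h2 : e m '' t ⊆ U := Set.image_subset_iff.mpr htU
    exact hbad (e m '' t) htM h1 h2
  obtain ⟨n, hn⟩ := key
  choose F h1 h2 h3 h4 using hn
  refine ⟨n, Set.range F, M, ?_, ?_, hMc, ?_⟩
  · apply Set.eq_univ_of_forall
    intro z
    exact ⟨F z, ⟨z, rfl⟩, h1 z⟩
  · rintro c ⟨z, rfl⟩
    exact ⟨h2 z, h3 z⟩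
  · rintro c ⟨z, rfl⟩ U hU hcU
    exact h4 z U hU hcU
end

section
/- Let X be a Tychonoff space such that X^ω ∈ LΣ(<ω) (the countable power admits a cover by finite subsets with a countable network). Then X^ω is hereditarily separable: every subspace of X^ω is separable. -/
open Set TopologicalSpace

section Aux

/-- The index type: an uncountable well-order all of whose initial segments are countable. -/
abbrev IndexW : Type := (Cardinal.aleph 1 : Cardinal.{0}).ord.ToType

theorem indexW_nonempty : Nonempty IndexW := by
  rw [← Cardinal.mk_ne_zero_iff, Cardinal.mk_toType, Cardinal.card_ord]
  exact (Cardinal.aleph0_lt_aleph_one.trans_le' (by simp)).ne'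

theorem indexW_Iio_countable (a : IndexW) : (Set.Iio a).Countable := by
  rw [Cardinal.countable_iff_lt_aleph_one]
  exact Cardinal.mk_Iio_ord_toType a

theorem indexW_univ_not_countable : ¬ (Set.univ : Set IndexW).Countable := by
  rw [Cardinal.countable_iff_lt_aleph_one, Cardinal.mk_univ, Cardinal.mk_toType,
    Cardinal.card_ord]
  simp

theorem indexW_ub {A : Set IndexW} (hA : A.Countable) : ∃ b : IndexW, ∀ a ∈ A, a < b := by
  have hU : (⋃ a ∈ A, Set.Iic a).Countable := by
    refine Set.Countable.biUnion hA fun a _ => ?_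
    have : Set.Iic a = Set.Iio a ∪ {a} := by
      ext y; simp [le_iff_lt_or_eq]
    rw [this]
    exact (indexW_Iio_countable a).union (Set.countable_singleton a)
  have hns : ¬ (Set.univ : Set IndexW) ⊆ ⋃ a ∈ A, Set.Iic a := fun hsub =>
    indexW_univ_not_countable (Set.Countable.mono hsub hU)
  rw [Set.not_subset] at hns
  obtain ⟨b, -, hb⟩ := hns
  refine ⟨b, fun a ha => ?_⟩
  by_contra hlt
  exact hb (Set.mem_biUnion ha (by simpa using le_of_not_gt hlt))

/-- If a countable subset of `S` is dense in `S`, then `S` is a separable subspace. -/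
theorem separableSpace_of_countable_dense {Y : Type*} [TopologicalSpace Y] {S D : Set Y}
    (hD : D.Countable) (hDS : D ⊆ S) (hcl : S ⊆ closure D) : SeparableSpace ↥S := by
  refine ⟨⟨{y : ↥S | (y : Y) ∈ D}, hD.preimage Subtype.coe_injective, ?_⟩⟩
  rw [dense_iff_closure_eq, Set.eq_univ_iff_forall]
  intro z
  rw [closure_subtype]
  have h2 : (Subtype.val '' {y : ↥S | (y : Y) ∈ D}) = D := by
    ext d
    constructor
    · rintro ⟨y, hy, rfl⟩; exact hy
    · intro hd; exact ⟨⟨d, hDS hd⟩, hd, rfl⟩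
  rw [h2]
  exact hcl z.2

end Aux

/-- if `X` is Tychonoff and `X^ω ∈ LΣ(<ω)`, then `X^ω` is hereditarily
separable: every subspace of `X^ω` is separable. -/
theorem stmt16 {X : Type*} [TopologicalSpace X] [T35Space X] (h : LSigmaFin (ℕ → X)) :
    ∀ S : Set (ℕ → X), SeparableSpace ↥S := by
  intro S
  by_contra hSep
  obtain ⟨C, N, hCov, hFin, hNcnt, hNet⟩ := h
  -- Y is nonempty (otherwise S is trivially separable)
  have hYne : Nonempty (ℕ → X) := by
    rcases isEmpty_or_nonempty (ℕ → X) with hE | hNE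
    · have hSE : IsEmpty ↥S := ⟨fun z => hE.elim z.1⟩
      exact absurd Countable.to_separableSpace hSep
    · exact hNE
  have hWne : Nonempty IndexW := indexW_nonempty
  -- a choice function producing points of `S` outside closures of countable subsets of `S`
  have P : ∀ D : Set (ℕ → X), ∃ z : ℕ → X,
      D.Countable → D ⊆ S → z ∈ S ∧ z ∉ closure D := by
    intro D
    by_cases hD : D.Countable ∧ D ⊆ S
    · by_contra hP
      push_neg at hP
      have hdom : S ⊆ closure D := fun z hz => (hP z).2.2 hz
      exact hSep (separableSpace_of_countable_dense hD.1 hD.2 hdom)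
    · exact ⟨Classical.arbitrary _, fun h1 h2 => absurd ⟨h1, h2⟩ hD⟩
  choose f hf using P
  -- the transfinite (left-separated) sequence `x`
  set wf : WellFounded ((· < ·) : IndexW → IndexW → Prop) := IsWellFounded.wf with hwf
  set F : ∀ w : IndexW, (∀ v, v < w → (ℕ → X)) → (ℕ → X) :=
    fun w ih => f {y | ∃ v, ∃ hv : v < w, ih v hv = y} with hFdef
  set x : IndexW → (ℕ → X) := wf.fix F with hxdef
  have hxeq : ∀ w : IndexW, x w = f (x '' Set.Iio w) := by
    intro w
    have h1 : x w = F w (fun v _ => x v) := by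
      rw [hxdef]
      exact wf.fix_eq F w
    rw [h1]
    have hset : {y | ∃ v, ∃ hv : v < w, x v = y} = x '' Set.Iio w := by
      ext y
      constructor
      · rintro ⟨v, hv, rfl⟩; exact ⟨v, hv, rfl⟩
      · rintro ⟨v, hv, rfl⟩; exact ⟨v, hv, rfl⟩
    show f {y | ∃ v, ∃ hv : v < w, x v = y} = f (x '' Set.Iio w)
    rw [hset]
  have hx : ∀ w : IndexW, x w ∈ S ∧ x w ∉ closure (x '' Set.Iio w) := by
    intro w
    induction w using wf.induction with
    | _ w ih =>
      have hcnt : (x '' Set.Iio w).Countable := (indexW_Iio_countable w).image x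
      have hsub : x '' Set.Iio w ⊆ S := by
        rintro - ⟨v, hv, rfl⟩
        exact (ih v hv).1
      rw [hxeq w]
      exact hf _ hcnt hsub
  -- the "row extraction" maps
  set r : ℕ → (ℕ → X) → (ℕ → X) := fun i w k => w (Nat.pair i k) with hrdef
  have hrcont : ∀ i, Continuous (r i) := fun i =>
    continuous_pi fun k => continuous_apply (Nat.pair i k)
  -- trace sets
  set Tset : ℕ → (ℕ → IndexW) → Set (ℕ → X) → Set IndexW := fun i p n =>
    {β : IndexW | ∃ w ∈ n, (∀ j < i, r j w = x (p j)) ∧ r i w = x β} with hTdef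
  have Tcongr : ∀ (i : ℕ) (p q : ℕ → IndexW) (n : Set (ℕ → X)),
      (∀ j < i, p j = q j) → Tset i p n = Tset i q n := by
    intro i p q n hpq
    ext β
    simp only [hTdef, Set.mem_setOf_eq]
    constructor
    · rintro ⟨w, hw, h1, h2⟩
      exact ⟨w, hw, fun j hj => by rw [← hpq j hj]; exact h1 j hj, h2⟩
    · rintro ⟨w, hw, h1, h2⟩
      exact ⟨w, hw, fun j hj => by rw [hpq j hj]; exact h1 j hj, h2⟩
  -- selector for nonempty sets of indices
  have hsel : ∀ T : Set IndexW, ∃ b : IndexW, T.Nonempty → b ∈ T := by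
    intro T
    by_cases hT : T.Nonempty
    · exact ⟨hT.choose, fun _ => hT.choose_spec⟩
    · exact ⟨Classical.arbitrary _, fun hT' => absurd hT' hT⟩
  choose sel hselspec using hsel
  -- upper bounds
  have hUB : ∀ (i : ℕ) (p : ℕ → IndexW), ∃ b : IndexW,
      ∀ a ∈ (fun n => sel (Tset i p n)) '' N, a < b := fun i p =>
    indexW_ub (hNcnt.image _)
  choose ubf hubf using hUB
  -- the fusion sequence of indices
  set wfn : WellFounded ((· < ·) : ℕ → ℕ → Prop) := Nat.lt_wfRel.wf with hwfn
  set Fδ : ∀ i : ℕ, (∀ j, j < i → IndexW) → IndexW :=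
    fun i ih => ubf i (fun j => if hj : j < i then ih j hj else sel ∅) with hFδdef
  set δ : ℕ → IndexW := wfn.fix Fδ with hδdef
  have hδeq : ∀ i, δ i = ubf i (fun j => if hj : j < i then δ j else sel ∅) := by
    intro i
    have h1 : δ i = Fδ i (fun j _ => δ j) := by
      rw [hδdef]
      exact wfn.fix_eq Fδ i
    rw [h1]
    try rfl
  have keyδ : ∀ i, ∀ n ∈ N, δ i ∈ Tset i δ n → ∃ β ∈ Tset i δ n, β < δ i := by
    intro i n hn hδT
    set p : ℕ → IndexW := fun j => if hj : j < i then δ j else sel ∅ with hpdef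
    have hpq : Tset i p n = Tset i δ n :=
      Tcongr i p δ n (fun j hj => by simp [hpdef, hj])
    have hne : (Tset i p n).Nonempty := ⟨δ i, hpq ▸ hδT⟩
    have hmem : sel (Tset i p n) ∈ Tset i δ n := hpq ▸ hselspec _ hne
    have hlt : sel (Tset i p n) < δ i := by
      rw [hδeq i]
      exact hubf i p _ (Set.mem_image_of_mem _ hn)
    exact ⟨_, hmem, hlt⟩
  -- the fusion point
  set ζ : ℕ → X := fun k => x (δ (Nat.unpair k).1) (Nat.unpair k).2 with hζdef
  have hrζ : ∀ j, r j ζ = x (δ j) := by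
    intro j
    funext k
    show ζ (Nat.pair j k) = x (δ j) k
    simp only [hζdef]
    rw [Nat.unpair_pair]
  -- the covering element containing ζ
  have hζu : ζ ∈ ⋃₀ C := by rw [hCov]; trivial
  obtain ⟨c, hcC, hζc⟩ := hζu
  have hcfin : c.Finite := hFin c hcC
  -- target sets
  set A : ℕ → Set (ℕ → X) := fun i =>
    {w | (∀ j < i, r j w = x (δ j)) ∧ ∃ β : IndexW, β < δ i ∧ r i w = x β} with hAdef
  -- key step: some element of c is in the closure of each A i
  have KEY : ∀ i, ∃ wst ∈ c, wst ∈ closure (A i) := by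
    intro i
    by_contra hK
    push_neg at hK
    have hG : ∀ w : ↥c, ∃ O : Set (ℕ → X), IsOpen O ∧ (w : ℕ → X) ∈ O ∧ O ∩ A i = ∅ := by
      intro w
      have := hK w w.2
      rw [mem_closure_iff] at this
      push_neg at this
      obtain ⟨O, hO, hwO, hOA⟩ := this
      exact ⟨O, hO, hwO, hOA⟩
    choose G hGopen hGmem hGA using hG
    have hWopen : IsOpen (⋃ w : ↥c, G w) := isOpen_iUnion fun w => hGopen w
    have hcW : c ⊆ ⋃ w : ↥c, G w := fun w hw => Set.mem_iUnion.mpr ⟨⟨w, hw⟩, hGmem ⟨w, hw⟩⟩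
    obtain ⟨n, hnN, hcn, hnW⟩ := hNet c hcC _ hWopen hcW
    have hδT : δ i ∈ Tset i δ n :=
      ⟨ζ, hcn hζc, fun j _ => hrζ j, hrζ i⟩
    obtain ⟨β, hβT, hβlt⟩ := keyδ i n hnN hδT
    obtain ⟨w', hw'n, hw'pat, hw'i⟩ := hβT
    have hw'A : w' ∈ A i := ⟨hw'pat, β, hβlt, hw'i⟩
    have hw'W : w' ∈ ⋃ w : ↥c, G w := hnW hw'n
    obtain ⟨w₀, hw₀⟩ := Set.mem_iUnion.mp hw'W
    have : w' ∈ G w₀ ∩ A i := ⟨hw₀, hw'A⟩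
    rw [hGA w₀] at this
    exact this
  choose wst hwstc hwstcl using KEY
  -- distinctness of the wst i
  have hC1 : ∀ i i', i < i' → r i (wst i') = x (δ i) := by
    intro i i' hii'
    have hsub : A i' ⊆ r i ⁻¹' {x (δ i)} := fun w hw => hw.1 i hii'
    have hcl : IsClosed (r i ⁻¹' {x (δ i)}) :=
      (isClosed_singleton).preimage (hrcont i)
    exact closure_minimal hsub hcl (hwstcl i')
  have hC2 : ∀ i, r i (wst i) ∈ closure (x '' Set.Iio (δ i)) := by
    intro i
    have hsub : A i ⊆ r i ⁻¹' closure (x '' Set.Iio (δ i)) := by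
      rintro w ⟨-, β, hβ, hri⟩
      exact subset_closure ⟨β, hβ, hri.symm⟩
    have hcl : IsClosed (r i ⁻¹' closure (x '' Set.Iio (δ i))) :=
      isClosed_closure.preimage (hrcont i)
    exact closure_minimal hsub hcl (hwstcl i)
  have hinj : ∀ i i', i < i' → wst i ≠ wst i' := by
    intro i i' hii' heq
    have h1 : r i (wst i) = x (δ i) := by rw [heq]; exact hC1 i i' hii'
    exact (hx (δ i)).2 (h1 ▸ hC2 i)
  -- cardinality contradiction
  set m : ℕ := hcfin.toFinset.card with hmdef
  have hcard : (Finset.range (m + 1)).card ≤ hcfin.toFinset.card := by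
    refine Finset.card_le_card_of_injOn wst (fun i _ => hcfin.mem_toFinset.mpr (hwstc i)) ?_
    intro i _ i' _ hii'
    rcases lt_trichotomy i i' with hlt | heq | hgt
    · exact absurd hii' (hinj i i' hlt)
    · exact heq
    · exact absurd hii'.symm (hinj i' i hgt)
  rw [Finset.card_range] at hcard
  omega
end

section
/- Let K be a compact Hausdorff space belonging to LΣ(≤ω), i.e., admitting a cover C by compact metrizable subsets together with a countable network with respect to C. Then the set of points of K that are Gδ-points (points x such that {x} is the intersection of countably many open sets) is dense in K. -/
open Set TopologicalSpace

/-- a compact Hausdorff space in `LΣ(≤ω)` has a dense set of `Gδ`-points. -/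
theorem stmt17 {K : Type*} [TopologicalSpace K] [CompactSpace K] [T2Space K]
    (h : LSigmaLeOmega K) :
    Dense {x : K | ∃ G : ℕ → Set K, (∀ n, IsOpen (G n)) ∧ (⋂ n, G n) = {x}} := by
  rw [dense_iff_inter_open]
  intro U hU hUne
  obtain ⟨C, N, hcov, hC, hNc, hnet⟩ := h
  -- `N` is nonempty
  have hNne : N.Nonempty := by
    obtain ⟨x0, hx0⟩ := hUne
    have hx0' : x0 ∈ ⋃₀ C := by rw [hcov]; exact mem_univ x0
    obtain ⟨c, hc, _⟩ := hx0'
    obtain ⟨n, hn, _⟩ := hnet c hc univ isOpen_univ (subset_univ _)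
    exact ⟨n, hn⟩
  obtain ⟨f, hf⟩ := hNc.exists_eq_range hNne
  -- shrinking lemma in a compact Hausdorff (hence regular) space
  have shrink : ∀ W : Set K, IsOpen W → W.Nonempty →
      ∃ V, IsOpen V ∧ V.Nonempty ∧ closure V ⊆ W := by
    rintro W hW ⟨x, hx⟩
    obtain ⟨t, ht, htc, hts⟩ := exists_mem_nhds_isClosed_subset (hW.mem_nhds hx)
    exact ⟨interior t, isOpen_interior, ⟨x, mem_interior_iff_mem_nhds.2 ht⟩,
      (closure_minimal interior_subset htc).trans hts⟩
  -- the recursive step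
  have step : ∀ (n : ℕ) (V : Set K), IsOpen V → V.Nonempty →
      ∃ V', IsOpen V' ∧ V'.Nonempty ∧ closure V' ⊆ V ∧
        (V ⊆ closure (f n) ∨ closure V' ∩ closure (f n) = ∅) := by
    intro n V hV hVne
    by_cases hcase : (V \ closure (f n)).Nonempty
    · obtain ⟨V', h1, h2, h3⟩ := shrink _ (hV.sdiff isClosed_closure) hcase
      refine ⟨V', h1, h2, h3.trans diff_subset, Or.inr ?_⟩
      apply eq_empty_iff_forall_notMem.2
      intro y hy
      exact (h3 hy.1).2 hy.2
    · obtain ⟨V', h1, h2, h3⟩ := shrink V hV hVne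
      exact ⟨V', h1, h2, h3, Or.inl (diff_eq_empty.mp (not_nonempty_iff_eq_empty.mp hcase))⟩
  choose! g hg1 hg2 hg3 hg4 using step
  obtain ⟨V0, hV0o, hV0ne, hV0U⟩ := shrink U hU hUne
  set V : ℕ → Set K := fun n => Nat.rec V0 (fun n Vn => g n Vn) n with hVdef
  have hVsucc : ∀ n, V (n + 1) = g n (V n) := fun n => rfl
  have hVprop : ∀ n, IsOpen (V n) ∧ (V n).Nonempty := by
    intro n
    induction n with
    | zero => exact ⟨hV0o, hV0ne⟩
    | succ n ih =>
      rw [hVsucc]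
      exact ⟨hg1 n _ ih.1 ih.2, hg2 n _ ih.1 ih.2⟩
  have hchain : ∀ n, closure (V (n + 1)) ⊆ V n := by
    intro n; rw [hVsucc]; exact hg3 n _ (hVprop n).1 (hVprop n).2
  have hdisj : ∀ n, V n ⊆ closure (f n) ∨ closure (V (n + 1)) ∩ closure (f n) = ∅ := by
    intro n; rw [hVsucc]; exact hg4 n _ (hVprop n).1 (hVprop n).2
  set F : Set K := ⋂ n, closure (V n) with hFdef
  have hFne : F.Nonempty := by
    apply IsCompact.nonempty_iInter_of_sequence_nonempty_isCompact_isClosed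
    · exact fun n => (hchain n).trans subset_closure
    · exact fun n => (hVprop n).2.closure
    · exact isClosed_closure.isCompact
    · exact fun n => isClosed_closure
  have hFV : ∀ n, F ⊆ V n := fun n => (iInter_subset _ (n + 1)).trans (hchain n)
  have hFU : F ⊆ U := (iInter_subset _ 0).trans hV0U
  obtain ⟨x, hxF⟩ := hFne
  have hx' : x ∈ ⋃₀ C := by rw [hcov]; exact mem_univ x
  obtain ⟨c, hcC, hxc⟩ := hx'
  -- F ⊆ c
  have hFc : F ⊆ c := by
    intro y hyF
    by_contra hyc
    have hccomp := (hC c hcC).1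
    obtain ⟨W, W', hWo, hW'o, hcW, hyW', hWW'⟩ :=
      SeparatedNhds.of_isCompact_isCompact hccomp isCompact_singleton
        (disjoint_singleton_right.2 hyc)
    obtain ⟨n', hn'N, hcn, hnW⟩ := hnet c hcC W hWo hcW
    rw [hf] at hn'N
    obtain ⟨n, rfl⟩ := hn'N
    have hclW : closure (f n) ⊆ W'ᶜ :=
      closure_minimal (hnW.trans (subset_compl_iff_disjoint_right.2 hWW'))
        hW'o.isClosed_compl
    have hyNcl : y ∉ closure (f n) := fun hy => hclW hy (hyW' rfl)
    rcases hdisj n with hl | hr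
    · exact hyNcl (hl (hFV n hyF))
    · have hx1 : x ∈ closure (V (n + 1)) := mem_iInter.mp hxF (n + 1)
      have hx2 : x ∈ closure (f n) := subset_closure (hcn hxc)
      exact absurd (mem_inter hx1 hx2) (by rw [hr]; exact notMem_empty x)
  -- F is metrizable
  haveI : MetrizableSpace c := (hC c hcC).2
  haveI : MetrizableSpace F := (Topology.IsEmbedding.inclusion hFc).metrizableSpace
  have hGδ : IsGδ ({⟨x, hxF⟩} : Set F) := IsGδ.singleton _
  obtain ⟨O, hOopen, hOeq⟩ := isGδ_iff_eq_iInter_nat.mp hGδ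
  have hW : ∀ n, ∃ t : Set K, IsOpen t ∧ Subtype.val ⁻¹' t = O n := by
    intro n
    obtain ⟨t, ht, hts⟩ := isOpen_induced_iff.mp (hOopen n)
    exact ⟨t, ht, hts⟩
  choose W hWopen hWeq using hW
  refine ⟨x, hFU hxF, ?_⟩
  refine ⟨fun n => W n ∩ V n, fun n => (hWopen n).inter (hVprop n).1, ?_⟩
  apply Subset.antisymm
  · intro z hz
    have hzF : z ∈ F :=
      mem_iInter.2 fun n => subset_closure (mem_iInter.mp hz n).2
    have hzO : (⟨z, hzF⟩ : F) ∈ ⋂ n, O n := by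
      refine mem_iInter.2 fun n => ?_
      rw [← hWeq n]
      exact (mem_iInter.mp hz n).1
    rw [← hOeq] at hzO
    have : z = x := congrArg Subtype.val (mem_singleton_iff.mp hzO)
    exact this ▸ rfl
  · intro z hz
    rw [mem_singleton_iff] at hz
    subst hz
    refine mem_iInter.2 fun n => ⟨?_, hFV n hxF⟩
    have : (⟨z, hxF⟩ : F) ∈ O n := by
      have : (⟨z, hxF⟩ : F) ∈ ⋂ n, O n := by rw [← hOeq]; exact rfl
      exact mem_iInter.mp this n
    rw [← hWeq n] at this
    exact this
end

section
/- Suppose {A_α : α < ω₁} is a strongly almost disjoint family of subsets of ω₁ (each A_α is infinite and A_α ∩ A_β is finite whenever α ≠ β), and {p_α : α < ω₁} is a family of pairwise disjoint finite subsets of ω₁. Then there exist ordinals α < β < ω₁ such that p_α ∩ A_β = ∅ and p_β ∩ A_α = ∅. -/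
open Set

/-- Auxiliary finiteness lemma: if every `i` with `∃ x, Q i x` has all its witnesses in a
fixed finite set `s`, and distinct indices cannot share a witness, then the set of such `i`
is finite. -/
lemma aux_fin {I X : Type*} (Q : I → X → Prop) {s : Set X} (hs : s.Finite)
    (hQs : ∀ i x, Q i x → x ∈ s) (hinj : ∀ i j x, Q i x → Q j x → i = j) :
    {i | ∃ x, Q i x}.Finite := by
  rcases Set.eq_empty_or_nonempty {i | ∃ x, Q i x} with h | ⟨i0, x0, hx0⟩
  · simp [h]
  haveI : Nonempty X := ⟨x0⟩
  classical
  set f : I → X := fun i => if h : ∃ x, Q i x then h.choose else Classical.arbitrary X with hf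
  have hfQ : ∀ i : I, (∃ x, Q i x) → Q i (f i) := by
    intro i hi
    simp only [hf, dif_pos hi]
    exact hi.choose_spec
  apply Set.Finite.of_finite_image (f := f)
  · apply hs.subset
    rintro y ⟨i, hi, rfl⟩
    exact hQs i _ (hfQ i hi)
  · intro i hi j hj hij
    exact hinj i j (f i) (hfQ i hi) (hij ▸ hfQ j hj)

/-- if `{A_α : α < ω₁}` is a strongly almost disjoint family of subsets of
`ω₁` and `{p_α : α < ω₁}` is a family of pairwise disjoint finite subsets of `ω₁`, then
there are `α < β` with `p_α ∩ A_β = ∅` and `p_β ∩ A_α = ∅`. -/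
theorem stmt18 (A : Omega1 → Set Omega1) (hinf : ∀ α, (A α).Infinite)
    (had : ∀ α β, α ≠ β → (A α ∩ A β).Finite)
    (p : Omega1 → Set Omega1) (hpfin : ∀ α, (p α).Finite)
    (hpd : ∀ α β, α ≠ β → Disjoint (p α) (p β)) :
    ∃ α β : Omega1, α < β ∧ p α ∩ A β = ∅ ∧ p β ∩ A α = ∅ := by
  classical
  by_contra hcon
  push_neg at hcon
  -- symmetric form of the failure assumption
  have hfail : ∀ α β : Omega1, α ≠ β →
      (p α ∩ A β).Nonempty ∨ (p β ∩ A α).Nonempty := by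
    intro α β hne
    by_contra hx
    push_neg at hx
    rcases hne.lt_or_gt with h | h
    · exact absurd hx.2 (hcon α β h hx.1).ne_empty
    · exact absurd hx.1 (hcon β α h hx.2).ne_empty
  -- Omega1 is uncountable
  have huniv : ¬ (Set.univ : Set Omega1).Countable := by
    intro h
    haveI : Countable Omega1 := Set.countable_univ_iff.mp h
    have h1 : Cardinal.mk Omega1 ≤ Cardinal.aleph0 := Cardinal.mk_le_aleph0
    rw [Cardinal.mk_toType, Cardinal.card_ord] at h1
    exact absurd (lt_of_lt_of_le Cardinal.aleph0_lt_aleph_one h1) (lt_irrefl _)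
  -- some size k occurs infinitely often
  have hex : ∃ k : ℕ, {γ : Omega1 | (p γ).ncard = k}.Infinite := by
    by_contra hk
    push_neg at hk
    have hk : ∀ k : ℕ, {γ : Omega1 | (p γ).ncard = k}.Finite := by simpa using hk
    apply huniv
    have hsub : (Set.univ : Set Omega1) ⊆ ⋃ k : ℕ, {γ | (p γ).ncard = k} :=
      fun γ _ => Set.mem_iUnion.2 ⟨(p γ).ncard, rfl⟩
    exact ((Set.countable_iUnion fun k => (hk k).countable).mono hsub)
  obtain ⟨k, hW⟩ := hex
  let e := hW.natEmbedding
  let a : ℕ → Omega1 := fun n => (e n : Omega1)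
  have ha_inj : Function.Injective a := by
    intro n m h
    exact e.injective (Subtype.ext h)
  have haW : ∀ n, (p (a n)).ncard = k := fun n => (e n).2
  -- the countable "bad" set
  let Bnm : ℕ → ℕ → Set Omega1 := fun n m =>
    {β | ∃ x, x ∈ p β ∧ x ∈ A (a n) ∧ x ∈ A (a m)}
  have hB : ∀ n m : ℕ, n ≠ m → (Bnm n m).Finite := by
    intro n m hnm
    apply aux_fin (Q := fun β x => x ∈ p β ∧ x ∈ A (a n) ∧ x ∈ A (a m))
      (s := A (a n) ∩ A (a m)) (had _ _ fun h => hnm (ha_inj h))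
    · rintro i x ⟨_, h1, h2⟩; exact ⟨h1, h2⟩
    · rintro i j x ⟨hxi, _, _⟩ ⟨hxj, _, _⟩
      by_contra hij
      exact Set.disjoint_left.mp (hpd i j hij) hxi hxj
  let C : Set Omega1 := (⋃ n, ⋃ m, ⋃ (_ : n ≠ m), Bnm n m) ∪ Set.range a
  have hC : C.Countable := by
    apply Set.Countable.union
    · exact Set.countable_iUnion fun n => Set.countable_iUnion fun m =>
        Set.countable_iUnion fun h => (hB n m h).countable
    · exact Set.countable_range a
  have hW' : (Set.univ \ C).Infinite := by
    by_contra h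
    rw [Set.not_infinite] at h
    apply huniv
    have hsub : (Set.univ : Set Omega1) ⊆ C ∪ (Set.univ \ C) := by
      intro x _
      by_cases hx : x ∈ C
      · exact Or.inl hx
      · exact Or.inr ⟨trivial, hx⟩
    exact ((hC.union h.countable).mono hsub)
  let g := hW'.natEmbedding
  let b : Fin (k + 1) → Omega1 := fun i => (g i.val : Omega1)
  have hb_inj : ∀ i j : Fin (k + 1), b i = b j → i = j :=
    fun i j h => Fin.ext (g.injective (Subtype.ext h))
  have hbC : ∀ i, b i ∉ C := fun i => (g i.val).2.2
  have hbne_a : ∀ i n, b i ≠ a n := by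
    intro i n h
    exact hbC i (Or.inr ⟨n, h.symm⟩)
  -- the sets M i of "good" columns
  let M : Fin (k + 1) → Set ℕ := fun i => {n | (p (a n) ∩ A (b i)).Nonempty}
  have hMco : ∀ i, ((M i)ᶜ : Set ℕ).Finite := by
    intro i
    have hfin : {n : ℕ | ∃ x, x ∈ p (b i) ∧ x ∈ A (a n)}.Finite := by
      apply aux_fin (Q := fun n x => x ∈ p (b i) ∧ x ∈ A (a n)) (s := p (b i)) (hpfin _)
      · rintro n x ⟨h1, _⟩; exact h1
      · rintro n m x ⟨hx1, hx2⟩ ⟨hy1, hy2⟩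
        by_contra hnm
        exact hbC i (Or.inl (Set.mem_iUnion.2 ⟨n, Set.mem_iUnion.2 ⟨m,
          Set.mem_iUnion.2 ⟨hnm, ⟨x, hx1, hx2, hy2⟩⟩⟩⟩))
    apply hfin.subset
    intro n hn
    rcases hfail (a n) (b i) (fun h => hbne_a i n h.symm) with h | h
    · exact absurd h hn
    · obtain ⟨x, hx1, hx2⟩ := h
      exact ⟨x, hx1, hx2⟩
  haveI : Nonempty Omega1 := ⟨a 0⟩
  -- choice of witnesses
  let w : Fin (k + 1) → ℕ → Omega1 := fun i n =>
    if h : (p (a n) ∩ A (b i)).Nonempty then h.choose else a 0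
  have hw : ∀ i n, n ∈ M i → w i n ∈ p (a n) ∩ A (b i) := by
    intro i n hn
    have hn' : (p (a n) ∩ A (b i)).Nonempty := hn
    simp only [w]
    rw [dif_pos hn']
    exact hn'.choose_spec
  -- agreement sets are finite
  let G : Fin (k + 1) → Fin (k + 1) → Set ℕ := fun i j =>
    {n | n ∈ M i ∧ n ∈ M j ∧ w i n = w j n}
  have hG : ∀ i j, i ≠ j → (G i j).Finite := by
    intro i j hij
    have hbij : b i ≠ b j := fun h => hij (hb_inj i j h)
    have hfin : {n : ℕ | ∃ x, x ∈ p (a n) ∧ x ∈ A (b i) ∧ x ∈ A (b j)}.Finite := by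
      apply aux_fin (Q := fun n x => x ∈ p (a n) ∧ x ∈ A (b i) ∧ x ∈ A (b j))
        (s := A (b i) ∩ A (b j)) (had _ _ hbij)
      · rintro n x ⟨_, h1, h2⟩; exact ⟨h1, h2⟩
      · rintro n m x ⟨hx1, _, _⟩ ⟨hy1, _, _⟩
        by_contra hnm
        exact Set.disjoint_left.mp (hpd (a n) (a m) fun h => hnm (ha_inj h)) hx1 hy1
    apply hfin.subset
    rintro n ⟨hni, hnj, hwn⟩
    obtain ⟨h1, h2⟩ := hw i n hni
    obtain ⟨h3, h4⟩ := hw j n hnj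
    exact ⟨w i n, h1, h2, hwn ▸ h4⟩
  -- pick a column avoiding all bad sets
  let Bad : Set ℕ := (⋃ i, (M i)ᶜ) ∪ ⋃ i, ⋃ j, ⋃ (_ : i ≠ j), G i j
  have hBad : Bad.Finite := by
    apply Set.Finite.union
    · exact Set.finite_iUnion hMco
    · exact Set.finite_iUnion fun i => Set.finite_iUnion fun j =>
        Set.finite_iUnion fun h => hG i j h
  obtain ⟨n, hn⟩ := hBad.infinite_compl.nonempty
  have hnM : ∀ i, n ∈ M i := by
    intro i
    by_contra h
    exact hn (Or.inl (Set.mem_iUnion.2 ⟨i, h⟩))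
  have hinjw : ∀ i j : Fin (k + 1), w i n = w j n → i = j := by
    intro i j h
    by_contra hij
    exact hn (Or.inr (Set.mem_iUnion.2 ⟨i, Set.mem_iUnion.2 ⟨j,
      Set.mem_iUnion.2 ⟨hij, hnM i, hnM j, h⟩⟩⟩))
  -- final counting contradiction: k+1 distinct points in a k-element set
  have hfinp := hpfin (a n)
  have hcard : hfinp.toFinset.card = k := by
    rw [← Set.ncard_eq_toFinset_card (p (a n)) hfinp]
    exact haW n
  have hle : (Finset.univ : Finset (Fin (k + 1))).card ≤ hfinp.toFinset.card := by
    apply Finset.card_le_card_of_injOn (fun i => w i n)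
    · intro i _
      rw [Finset.mem_coe, Set.Finite.mem_toFinset]
      exact (hw i n (hnM i)).1
    · intro i _ j _ h
      exact hinjw i j h
  rw [Finset.card_univ, Fintype.card_fin, hcard] at hle
  omega
end
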